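/- arXiv:1905.09331 — 3 statements merged into one kernel-verified Lean document; each statement's English description precedes it below -/
import Mathlib

section
/- Let Φ be a simply-laced irreducible finite crystallographic root system and let w ∈ W(Φ) avoid the type A₃ patterns 3142 and 2413. Suppose α, β, γ ∈ Φ⁺ span a root subsystem of type A₃ as simple roots in this order, i.e. (α,β) = (β,γ) = −1 and (α,γ) = 0 (roots normalized to squared length 2). If β, α+β, and β+γ all have the same color with respect to w (all in I_Φ(w), or all not in I_Φ(w)), then α+β+γ has that same color. -/
open scoped Classical
open Polynomial
noncomputable section

/-- The ambient Euclidean space `ℝⁿ`. -/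
abbrev Esp (n : ℕ) : Type := EuclideanSpace ℝ (Fin n)

/-- The orthogonal reflection in the hyperplane orthogonal to the vector `α`. -/
def rootReflection {n : ℕ} (α : Esp n) : Esp n ≃ₗᵢ[ℝ] Esp n :=
  Submodule.reflection ((ℝ ∙ α)ᗮ)

/-- A finite crystallographic reduced root system in `ℝⁿ`, together with a chosen
system of positive roots.  (The root system is not required to span `ℝⁿ`, so that
subsystems of a root system are again root systems in the same ambient space.) -/
structure RootSys (n : ℕ) where
  roots : Finset (Esp n)
  pos : Finset (Esp n)
  ne_zero : ∀ α ∈ roots, α ≠ (0 : Esp n)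
  neg_mem : ∀ α ∈ roots, -α ∈ roots
  reduced : ∀ α ∈ roots, ∀ t : ℝ, t • α ∈ roots → t = 1 ∨ t = -1
  reflect_mem : ∀ α ∈ roots, ∀ β ∈ roots, rootReflection α β ∈ roots
  crystal : ∀ α ∈ roots, ∀ β ∈ roots, ∃ k : ℤ, 2 * (inner ℝ α β : ℝ) / (inner ℝ α α : ℝ) = (k : ℝ)
  pos_subset : pos ⊆ roots
  pos_iff : ∀ α ∈ roots, (α ∈ pos ↔ -α ∉ pos)
  pos_add : ∀ α ∈ pos, ∀ β ∈ pos, α + β ∈ roots → α + β ∈ pos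

namespace RootSys

variable {n : ℕ}

/-- The Weyl group of a root system: the subgroup of the linear isometries of `ℝⁿ`
generated by the reflections in the roots. -/
def weylGroup (Φ : RootSys n) : Subgroup (Esp n ≃ₗᵢ[ℝ] Esp n) :=
  Subgroup.closure {g | ∃ α ∈ Φ.roots, g = rootReflection α}

/-- The inversion set `I_Φ(w) = {α ∈ Φ⁺ : w α ∈ -Φ⁺}`. -/
def invSet (Φ : RootSys n) (w : Esp n ≃ₗᵢ[ℝ] Esp n) : Finset (Esp n) :=
  Φ.pos.filter fun α => -(w α) ∈ Φ.pos

/-- The length of a Weyl group element, `ℓ(w) = |I_Φ(w)|`. -/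
def len (Φ : RootSys n) (w : Esp n ≃ₗᵢ[ℝ] Esp n) : ℕ :=
  (Φ.invSet w).card

/-- The simple roots: the indecomposable positive roots. -/
def simples (Φ : RootSys n) : Finset (Esp n) :=
  Φ.pos.filter fun α => ¬ ∃ β ∈ Φ.pos, ∃ γ ∈ Φ.pos, α = β + γ

/-- The root poset order: `α ≤ β` iff `β - α` is a nonnegative linear combination of
the simple roots. -/
def rootLE (Φ : RootSys n) (α β : Esp n) : Prop :=
  ∃ c : Esp n → ℝ, (∀ γ, 0 ≤ c γ) ∧ β - α = ∑ γ ∈ Φ.simples, c γ • γ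

/-- The positive roots `β` with `β ≥ α` in the root poset order. -/
def upperRoots (Φ : RootSys n) (α : Esp n) : Finset (Esp n) :=
  Φ.pos.filter fun β => Φ.rootLE α β

/-- `Φ'` is the parabolic root subsystem of `Φ` generated by the subset `Δ'` of the
simple roots. -/
def IsParabolic (Φ Φ' : RootSys n) (Δ' : Finset (Esp n)) : Prop :=
  Φ'.roots = Φ.roots.filter (fun β => β ∈ Submodule.span ℝ (Δ' : Set (Esp n))) ∧
  Φ'.pos = Φ.pos.filter (fun β => β ∈ Submodule.span ℝ (Δ' : Set (Esp n)))

/-- `u` is the restriction `w|_{Φ'}` of `w` to the subsystem `Φ'` of `Φ`: the unique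
element of `W(Φ')` with `I_{Φ'}(u) = I_Φ(w) ∩ (Φ')⁺`. -/
def IsRestriction (Φ' : RootSys n) (u : Esp n ≃ₗᵢ[ℝ] Esp n)
    (Φ : RootSys n) (w : Esp n ≃ₗᵢ[ℝ] Esp n) : Prop :=
  u ∈ Φ'.weylGroup ∧ Φ'.invSet u = Φ.invSet w ∩ Φ'.pos

/-- A decomposition of `Φ` as an orthogonal direct sum of two nonempty subsystems. -/
def IsOrthDecomp (Φ Φ₁ Φ₂ : RootSys n) : Prop :=
  Φ₁.roots.Nonempty ∧ Φ₂.roots.Nonempty ∧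
  (∀ α ∈ Φ₁.roots, ∀ β ∈ Φ₂.roots, (inner ℝ α β : ℝ) = 0) ∧
  Φ.roots = Φ₁.roots ∪ Φ₂.roots ∧ Φ.pos = Φ₁.pos ∪ Φ₂.pos

/-- Irreducibility of a (nonempty) root system. -/
def IsIrreducible (Φ : RootSys n) : Prop :=
  Φ.roots.Nonempty ∧ ¬ ∃ Φ₁ Φ₂ : RootSys n, Φ.IsOrthDecomp Φ₁ Φ₂

/-- `w₀` is the longest element of `W(Φ)`: the element whose inversion set is all of `Φ⁺`. -/
def IsLongest (Φ : RootSys n) (w₀ : Esp n ≃ₗᵢ[ℝ] Esp n) : Prop :=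
  w₀ ∈ Φ.weylGroup ∧ Φ.invSet w₀ = Φ.pos

end RootSys

/-- Separable elements of a Weyl group (Definition 3.1 of the paper):
`w` is separable if `Φ` has rank one; or `Φ` is reducible and the restriction of `w`
to each part of an orthogonal decomposition is separable; or `Φ` is irreducible and
there is a pivot `α ∈ Δ` such that the restriction of `w` to the parabolic subsystem
generated by `Δ ∖ {α}` is separable and `{β ∈ Φ⁺ : β ≥ α}` is contained in or
disjoint from `I_Φ(w)`. -/
inductive Separable : {n : ℕ} → (Φ : RootSys n) → (Esp n ≃ₗᵢ[ℝ] Esp n) → Prop where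
  | rank_one {n : ℕ} (Φ : RootSys n) (w : Esp n ≃ₗᵢ[ℝ] Esp n)
      (hw : w ∈ Φ.weylGroup) (hrk : ∃ α, Φ.pos = {α}) : Separable Φ w
  | reducible {n : ℕ} (Φ Φ₁ Φ₂ : RootSys n) (w u₁ u₂ : Esp n ≃ₗᵢ[ℝ] Esp n)
      (hw : w ∈ Φ.weylGroup) (hd : Φ.IsOrthDecomp Φ₁ Φ₂)
      (h₁ : Φ₁.IsRestriction u₁ Φ w) (h₂ : Φ₂.IsRestriction u₂ Φ w)
      (s₁ : Separable Φ₁ u₁) (s₂ : Separable Φ₂ u₂) : Separable Φ w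
  | pivot {n : ℕ} (Φ Φ' : RootSys n) (w u : Esp n ≃ₗᵢ[ℝ] Esp n) (α : Esp n)
      (hw : w ∈ Φ.weylGroup) (hirr : Φ.IsIrreducible) (hα : α ∈ Φ.simples)
      (hpar : Φ.IsParabolic Φ' (Φ.simples \ {α}))
      (hres : Φ'.IsRestriction u Φ w) (hsep : Separable Φ' u)
      (hcond : Φ.upperRoots α ⊆ Φ.invSet w ∨ ∀ β ∈ Φ.upperRoots α, β ∉ Φ.invSet w) :
      Separable Φ w

/-- The rank generating polynomial `∑_{i=0}^{N} a_i qⁱ` of a sequence of coefficients. -/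
def genPoly (a : ℕ → ℕ) (N : ℕ) : Polynomial ℤ :=
  ∑ i ∈ Finset.range (N + 1), Polynomial.C (a i : ℤ) * Polynomial.X ^ i

/-- A sequence is unimodal (weakly increases, then weakly decreases). -/
def UnimodalSeq (a : ℕ → ℕ) : Prop :=
  ∃ m : ℕ, (∀ i j, i ≤ j → j ≤ m → a i ≤ a j) ∧ (∀ i j, m ≤ i → i ≤ j → a j ≤ a i)

namespace RootSys

variable {n : ℕ}

/-- The size of the `i`-th rank of the lower order ideal `Λ_w` in left weak order. -/
def lowerRankSize (Φ : RootSys n) (w : Esp n ≃ₗᵢ[ℝ] Esp n) (i : ℕ) : ℕ :=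
  Set.ncard {u : Esp n ≃ₗᵢ[ℝ] Esp n |
    u ∈ Φ.weylGroup ∧ Φ.invSet u ⊆ Φ.invSet w ∧ Φ.len u = i}

/-- The size of the `i`-th rank of the upper order ideal `V_w` in left weak order
(graded by `ℓ(u) - ℓ(w)`). -/
def upperRankSize (Φ : RootSys n) (w : Esp n ≃ₗᵢ[ℝ] Esp n) (i : ℕ) : ℕ :=
  Set.ncard {u : Esp n ≃ₗᵢ[ℝ] Esp n |
    u ∈ Φ.weylGroup ∧ Φ.invSet w ⊆ Φ.invSet u ∧ Φ.len u = Φ.len w + i}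

/-- The number of elements of the Weyl group of length `i`. -/
def weylRankSize (Φ : RootSys n) (i : ℕ) : ℕ :=
  Set.ncard {u : Esp n ≃ₗᵢ[ℝ] Esp n | u ∈ Φ.weylGroup ∧ Φ.len u = i}

end RootSys

namespace RootSys

variable {n : ℕ}

/-- `(w, Φ)` contains one of the type `A₃` patterns `3142` or `2413`: there is a
subsystem `Φ ∩ U` of type `A₃` with simple roots `a, b, c` (in this order) on which
the inversion set of `w` restricts to the inversion set of `3142` (namely
`{a, c, a+b+c}`) or of `2413` (namely `{b, a+b, b+c}`). -/
def ContainsA3Pattern (Φ : RootSys n) (w : Esp n ≃ₗᵢ[ℝ] Esp n) : Prop :=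
  ∃ (U : Submodule ℝ (Esp n)) (a b c : Esp n),
    LinearIndependent ℝ ![a, b, c] ∧
    Φ.pos.filter (fun β => β ∈ U) = ({a, b, c, a + b, b + c, a + b + c} : Finset (Esp n)) ∧
    ((Φ.invSet w).filter (fun β => β ∈ U) = ({b, a + b, b + c} : Finset (Esp n)) ∨
      (Φ.invSet w).filter (fun β => β ∈ U) = ({a, c, a + b + c} : Finset (Esp n)))

/-- `(w, Φ)` contains one of the two type `B₂` patterns whose inversion sets have
size two: there is a subsystem `Φ ∩ U` of type `B₂` on which the inversion set of
`w` restricts to a set of size two. -/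
def ContainsB2Pattern (Φ : RootSys n) (w : Esp n ≃ₗᵢ[ℝ] Esp n) : Prop :=
  ∃ (U : Submodule ℝ (Esp n)) (p q : Esp n),
    LinearIndependent ℝ ![p, q] ∧
    Φ.pos.filter (fun β => β ∈ U) = ({p, q, p + q, p + 2 • q} : Finset (Esp n)) ∧
    ((Φ.invSet w).filter (fun β => β ∈ U)).card = 2

/-- `(w, Φ)` contains one of the six type `G₂` patterns whose inversion sets have
sizes two, three, or four. -/
def ContainsG2Pattern (Φ : RootSys n) (w : Esp n ≃ₗᵢ[ℝ] Esp n) : Prop :=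
  ∃ (U : Submodule ℝ (Esp n)) (p q : Esp n),
    LinearIndependent ℝ ![p, q] ∧
    Φ.pos.filter (fun β => β ∈ U) =
      ({p, q, p + q, p + 2 • q, p + 3 • q, 2 • p + 3 • q} : Finset (Esp n)) ∧
    ((Φ.invSet w).filter (fun β => β ∈ U)).card ∈ ({2, 3, 4} : Set ℕ)

/-- A positive root is *small* if all its coefficients on the simple roots are `0` or `1`. -/
def IsSmall (Φ : RootSys n) (β : Esp n) : Prop :=
  ∃ c : Esp n → ℝ, β = ∑ γ ∈ Φ.simples, c γ • γ ∧ ∀ γ ∈ Φ.simples, c γ = 0 ∨ c γ = 1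

/-- The support of `β` (written `β = ∑ c γ • γ` over the simple roots) contains the
simple root `t`. -/
def SuppContains (Φ : RootSys n) (t β : Esp n) : Prop :=
  ∃ c : Esp n → ℝ, β = ∑ γ ∈ Φ.simples, c γ • γ ∧ c t ≠ 0

/-- The parabolic subgroup `W_J` generated by the reflections in the roots of `J`. -/
def parabolicSubgroup (J : Finset (Esp n)) : Subgroup (Esp n ≃ₗᵢ[ℝ] Esp n) :=
  Subgroup.closure {g | ∃ α ∈ J, g = rootReflection α}

/-- `w` is a minimal-length coset representative of `w W_J`, i.e. `w ∈ W^J`. -/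
def IsMinCosetRep (Φ : RootSys n) (J : Finset (Esp n)) (w : Esp n ≃ₗᵢ[ℝ] Esp n) : Prop :=
  w ∈ Φ.weylGroup ∧ ∀ u ∈ parabolicSubgroup (n := n) J, Φ.len w ≤ Φ.len (w * u)

/-- Biconvexity of a subset `A` of a set `P` of positive roots. -/
def IsBiconvexIn (P A : Finset (Esp n)) : Prop :=
  A ⊆ P ∧ (∀ a ∈ A, ∀ b ∈ A, a + b ∈ P → a + b ∈ A) ∧
    (∀ a ∈ P, ∀ b ∈ P, a ∉ A → b ∉ A → a + b ∈ P → a + b ∉ A)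

/-- The number of elements of `W(Φ)` of length `ℓ(w') + i` restricting to `w'` on the
subsystem `Φ'`. -/
def fiberRankSize (Φ Φ' : RootSys n) (w' : Esp n ≃ₗᵢ[ℝ] Esp n) (i : ℕ) : ℕ :=
  Set.ncard {w : Esp n ≃ₗᵢ[ℝ] Esp n |
    w ∈ Φ.weylGroup ∧ Φ'.IsRestriction w' Φ w ∧ Φ.len w = Φ'.len w' + i}

end RootSys

/-- Isomorphism of patterns: a linear map carrying the roots, positive roots, and the
inversion set of the one pattern bijectively onto those of the other. -/
def PatternIso {m k : ℕ} (Ψ : RootSys m) (u : Esp m ≃ₗᵢ[ℝ] Esp m)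
    (Ψ' : RootSys k) (u' : Esp k ≃ₗᵢ[ℝ] Esp k) : Prop :=
  ∃ f : Esp m →ₗ[ℝ] Esp k,
    Set.InjOn f (Ψ.roots : Set (Esp m)) ∧
    Ψ.roots.image ⇑f = Ψ'.roots ∧ Ψ.pos.image ⇑f = Ψ'.pos ∧
    (Ψ.invSet u).image ⇑f = Ψ'.invSet u'

/-- `(w, Φ)` contains a pattern isomorphic to `(u, Ψ)`: there is a subsystem
`Φ ∩ U` of `Φ` on which `w` restricts to an element whose pattern is isomorphic
to `(u, Ψ)`. -/
def ContainsPatternGen {m k : ℕ} (Φ : RootSys m) (w : Esp m ≃ₗᵢ[ℝ] Esp m)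
    (Ψ : RootSys k) (u : Esp k ≃ₗᵢ[ℝ] Esp k) : Prop :=
  ∃ (U : Submodule ℝ (Esp m)) (Ψ₀ : RootSys m) (u₀ : Esp m ≃ₗᵢ[ℝ] Esp m),
    Ψ₀.roots = Φ.roots.filter (fun β => β ∈ U) ∧
    Ψ₀.pos = Φ.pos.filter (fun β => β ∈ U) ∧
    u₀ ∈ Ψ₀.weylGroup ∧ Ψ₀.invSet u₀ = (Φ.invSet w).filter (fun β => β ∈ U) ∧
    PatternIso Ψ₀ u₀ Ψ u

/-- The `i`-th standard basis vector of `ℝⁿ`. -/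
def stdB (n : ℕ) (i : Fin n) : Esp n := EuclideanSpace.single i (1 : ℝ)

/-- The `i`-th simple root of the type `Bₙ` root system: `eᵢ - eᵢ₊₁` for `i < n-1`
and `eₙ₋₁` (the last standard basis vector) for `i = n-1`. -/
def bSimple (n : ℕ) (i : Fin n) : Esp n :=
  stdB n i - (if h : (i : ℕ) + 1 < n then stdB n ⟨(i : ℕ) + 1, h⟩ else 0)

/-- The set of positive roots of the type `Bₙ` root system. -/
def typeBPos (n : ℕ) : Set (Esp n) :=
  {v | ∃ i j : Fin n, i < j ∧ (v = stdB n i - stdB n j ∨ v = stdB n i + stdB n j)} ∪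
    {v | ∃ i : Fin n, v = stdB n i}

/-- The set of positive roots of the type `Cₙ` root system. -/
def typeCPos (n : ℕ) : Set (Esp n) :=
  {v | ∃ i j : Fin n, i < j ∧ (v = stdB n i - stdB n j ∨ v = stdB n i + stdB n j)} ∪
    {v | ∃ i : Fin n, v = 2 • stdB n i}

/-- The set of positive roots of the type `Aₙ` root system (in `ℝⁿ⁺¹`). -/
def typeAPos (n : ℕ) : Set (Esp (n + 1)) :=
  {v | ∃ i j : Fin (n + 1), i < j ∧ v = stdB (n + 1) i - stdB (n + 1) j}

/-!
Inversion sets are closed, and so are their complements in `Φ⁺`: if two positive roots are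
black (white) and their sum is a root, the sum is black (white). Suppose `β`, `α + β`,
`β + γ` are black and `α + β + γ` is white. Writing `α + β + γ = α + (β + γ) = (α + β) + γ`
shows that `α` and `γ` are white, so on the span of `α, β, γ` the inversion set of `w` is
`{β, α + β, β + γ}`, the pattern `2413`. Dually, the all-white case forces the pattern `3142`.

It remains to see that the positive roots of `Φ` in the span of `α, β, γ` are exactly the six
positive roots of `A₃`: a root `aα + bβ + cγ` has integral pairings with `α, β, γ` and squared
length `2`, which leaves only the twelve roots of `A₃`.
-/

open scoped RealInnerProductSpace

namespace RootSys

variable {n : ℕ}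

theorem rootReflection_apply_of_inner_self_eq_two {β : Esp n} (hβ : ⟪β, β⟫ = 2) (x : Esp n) :
    rootReflection β x = x - ⟪β, x⟫ • β := by
  rw [rootReflection, Submodule.reflection_orthogonal_apply, Submodule.reflection_singleton_apply,
    RCLike.ofReal_real_eq_id, id, ← real_inner_self_eq_norm_sq, hβ]
  module

theorem add_mem_roots_of_inner_eq_neg_one (Φ : RootSys n) {α β : Esp n} (hα : α ∈ Φ.roots)
    (hβ : β ∈ Φ.roots) (hββ : ⟪β, β⟫ = 2) (hβα : ⟪β, α⟫ = -1) : α + β ∈ Φ.roots := by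
  simpa [rootReflection_apply_of_inner_self_eq_two hββ, hβα] using Φ.reflect_mem β hβ α hα

def rootsStabilizer (Φ : RootSys n) : Subgroup (Esp n ≃ₗᵢ[ℝ] Esp n) where
  carrier := {g | ∀ x, g x ∈ Φ.roots ↔ x ∈ Φ.roots}
  mul_mem' {g h} hg hh x := (hg (h x)).trans (hh x)
  one_mem' _ := Iff.rfl
  inv_mem' {g} hg x := by rw [← hg]; simp

theorem weylGroup_le_rootsStabilizer (Φ : RootSys n) : Φ.weylGroup ≤ Φ.rootsStabilizer := by
  refine (Subgroup.closure_le _).2 ?_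
  rintro _ ⟨α, hα, rfl⟩ x
  refine ⟨fun hx => ?_, Φ.reflect_mem α hα x⟩
  simpa [rootReflection] using Φ.reflect_mem α hα _ hx

theorem apply_mem_roots {Φ : RootSys n} {w : Esp n ≃ₗᵢ[ℝ] Esp n} (hw : w ∈ Φ.weylGroup)
    {x : Esp n} (hx : x ∈ Φ.roots) : w x ∈ Φ.roots :=
  (Φ.weylGroup_le_rootsStabilizer hw x).2 hx

theorem apply_mem_pos_of_notMem_invSet {Φ : RootSys n} {w : Esp n ≃ₗᵢ[ℝ] Esp n}
    (hw : w ∈ Φ.weylGroup) {a : Esp n} (ha : a ∈ Φ.pos) (hwa : a ∉ Φ.invSet w) :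
    w a ∈ Φ.pos :=
  (Φ.pos_iff _ (apply_mem_roots hw (Φ.pos_subset ha))).2 fun h => hwa (by simp [invSet, ha, h])

theorem add_mem_invSet {Φ : RootSys n} {w : Esp n ≃ₗᵢ[ℝ] Esp n} (hw : w ∈ Φ.weylGroup)
    {a b : Esp n} (ha : a ∈ Φ.invSet w) (hb : b ∈ Φ.invSet w) (hab : a + b ∈ Φ.roots) :
    a + b ∈ Φ.invSet w := by
  rw [invSet, Finset.mem_filter] at ha hb ⊢
  have hneg : -(w (a + b)) = -(w a) + -(w b) := by rw [map_add, neg_add]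
  refine ⟨Φ.pos_add a ha.1 b hb.1 hab, hneg ▸ Φ.pos_add _ ha.2 _ hb.2 ?_⟩
  exact hneg ▸ Φ.neg_mem _ (apply_mem_roots hw hab)

theorem add_notMem_invSet {Φ : RootSys n} {w : Esp n ≃ₗᵢ[ℝ] Esp n} (hw : w ∈ Φ.weylGroup)
    {a b : Esp n} (ha : a ∈ Φ.pos) (hb : b ∈ Φ.pos) (hwa : a ∉ Φ.invSet w)
    (hwb : b ∉ Φ.invSet w) (hab : a + b ∈ Φ.roots) : a + b ∉ Φ.invSet w := by
  have hr : w (a + b) ∈ Φ.roots := apply_mem_roots hw hab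
  have hpos : w (a + b) ∈ Φ.pos := by
    rw [map_add] at hr ⊢
    exact Φ.pos_add _ (apply_mem_pos_of_notMem_invSet hw ha hwa) _
      (apply_mem_pos_of_notMem_invSet hw hb hwb) hr
  exact fun h => (Φ.pos_iff _ hr).1 hpos (Finset.mem_filter.1 h).2

end RootSys

theorem mem_of_two_mul_sq_add_two_mul_sq_add_sq_eq_eight {p r s : ℤ}
    (h : 2 * p ^ 2 + 2 * r ^ 2 + s ^ 2 = 8) :
    (p, r, s) ∈ ({(2, 0, 0), (-2, 0, 0), (0, 2, 0), (0, -2, 0), (1, 1, 2), (-1, -1, -2),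
      (1, -1, 2), (-1, 1, -2), (-1, 1, 2), (1, -1, -2), (-1, -1, 2), (1, 1, -2)} :
      Finset (ℤ × ℤ × ℤ)) := by
  have hp₁ : -2 ≤ p := by nlinarith
  have hp₂ : p ≤ 2 := by nlinarith
  have hr₁ : -2 ≤ r := by nlinarith
  have hr₂ : r ≤ 2 := by nlinarith
  have hs₁ : -2 ≤ s := by nlinarith
  have hs₂ : s ≤ 2 := by nlinarith
  interval_cases p <;> interval_cases r <;> interval_cases s <;> simp_all

def a3PosCoeffs : Finset (ℝ × ℝ × ℝ) :=
  {(1, 0, 0), (0, 1, 0), (0, 0, 1), (1, 1, 0), (0, 1, 1), (1, 1, 1)}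

theorem mem_a3PosCoeffs_or_neg_mem {a b c : ℝ} {p q r : ℤ} (hp : (p : ℝ) = 2 * a - b)
    (hq : (q : ℝ) = -a + 2 * b - c) (hr : (r : ℝ) = -b + 2 * c)
    (hnorm : a * p + b * q + c * r = 2) :
    (a, b, c) ∈ a3PosCoeffs ∨ (-a, -b, -c) ∈ a3PosCoeffs := by
  -- With `s = 2b`, the norm condition reads `2p² + 2r² + s² = 8`.
  obtain ⟨s, hs⟩ : ∃ s : ℤ, (s : ℝ) = 2 * b := ⟨p + r + 2 * q, by push_cast; linarith⟩
  have h8 : 2 * p ^ 2 + 2 * r ^ 2 + s ^ 2 = 8 := by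
    have : (2 * p ^ 2 + 2 * r ^ 2 + s ^ 2 : ℝ) = 8 := by
      rw [hp, hq, hr] at hnorm
      rw [hp, hr, hs]
      linear_combination 4 * hnorm
    exact_mod_cast this
  obtain ⟨rfl, rfl, rfl⟩ : a = (2 * p + s) / 4 ∧ b = s / 2 ∧ c = (2 * r + s) / 4 :=
    ⟨by linarith, by linarith, by linarith⟩
  have hprs := mem_of_two_mul_sq_add_two_mul_sq_add_sq_eq_eight h8
  simp only [Finset.mem_insert, Finset.mem_singleton, Prod.mk.injEq] at hprs
  rcases hprs with ⟨rfl, rfl, rfl⟩ | ⟨rfl, rfl, rfl⟩ | ⟨rfl, rfl, rfl⟩ | ⟨rfl, rfl, rfl⟩ |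
    ⟨rfl, rfl, rfl⟩ | ⟨rfl, rfl, rfl⟩ | ⟨rfl, rfl, rfl⟩ | ⟨rfl, rfl, rfl⟩ | ⟨rfl, rfl, rfl⟩ |
    ⟨rfl, rfl, rfl⟩ | ⟨rfl, rfl, rfl⟩ | ⟨rfl, rfl, rfl⟩ <;>
  norm_num [a3PosCoeffs]

namespace RootSys

variable {n : ℕ}

structure IsA3Triple (Φ : RootSys n) (α β γ : Esp n) : Prop where
  left_mem : α ∈ Φ.pos
  mid_mem : β ∈ Φ.pos
  right_mem : γ ∈ Φ.pos
  inner_left_mid : ⟪α, β⟫ = -1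
  inner_mid_right : ⟪β, γ⟫ = -1
  inner_left_right : ⟪α, γ⟫ = 0

theorem IsA3Triple.linearIndependent {Φ : RootSys n}
    (hnorm : ∀ δ ∈ Φ.roots, ⟪δ, δ⟫ = 2) {α β γ : Esp n} (h : Φ.IsA3Triple α β γ) :
    LinearIndependent ℝ ![α, β, γ] := by
  have hαα : ‖α‖ ^ 2 = 2 := by
    rw [← real_inner_self_eq_norm_sq, hnorm α (Φ.pos_subset h.left_mem)]
  have hββ : ‖β‖ ^ 2 = 2 := by
    rw [← real_inner_self_eq_norm_sq, hnorm β (Φ.pos_subset h.mid_mem)]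
  have hγγ : ‖γ‖ ^ 2 = 2 := by
    rw [← real_inner_self_eq_norm_sq, hnorm γ (Φ.pos_subset h.right_mem)]
  have hG : Matrix.gram ℝ ![α, β, γ] = !![2, -1, 0; -1, 2, -1; 0, -1, 2] := by
    ext i j
    fin_cases i <;> fin_cases j <;>
      simp [Matrix.gram_apply, hαα, hββ, hγγ, h.inner_left_mid, h.inner_mid_right,
        h.inner_left_right, real_inner_comm α, real_inner_comm β]
  refine Matrix.linearIndependent_of_det_gram_ne_zero (𝕜 := ℝ) ?_
  rw [hG, Matrix.det_fin_three]
  simp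
  norm_num

theorem IsA3Triple.subset_pos {Φ : RootSys n} (hnorm : ∀ δ ∈ Φ.roots, ⟪δ, δ⟫ = 2)
    {α β γ : Esp n} (h : Φ.IsA3Triple α β γ) :
    ({α, β, γ, α + β, β + γ, α + β + γ} : Finset (Esp n)) ⊆ Φ.pos := by
  have hα := h.left_mem; have hβ := h.mid_mem; have hγ := h.right_mem
  have hαβ : α + β ∈ Φ.pos := Φ.pos_add _ hα _ hβ <|
    Φ.add_mem_roots_of_inner_eq_neg_one (Φ.pos_subset hα) (Φ.pos_subset hβ)
      (hnorm _ (Φ.pos_subset hβ)) (by rw [real_inner_comm, h.inner_left_mid])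
  have hβγ : β + γ ∈ Φ.pos := Φ.pos_add _ hβ _ hγ <|
    Φ.add_mem_roots_of_inner_eq_neg_one (Φ.pos_subset hβ) (Φ.pos_subset hγ)
      (hnorm _ (Φ.pos_subset hγ)) (by rw [real_inner_comm, h.inner_mid_right])
  have hαβγ : α + β + γ ∈ Φ.pos := Φ.pos_add _ hαβ _ hγ <|
    Φ.add_mem_roots_of_inner_eq_neg_one (Φ.pos_subset hαβ) (Φ.pos_subset hγ)
      (hnorm _ (Φ.pos_subset hγ))
      (by rw [inner_add_right, real_inner_comm, h.inner_left_right, real_inner_comm,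
        h.inner_mid_right, zero_add])
  simp [Finset.insert_subset_iff, *]

theorem IsA3Triple.mem_of_mem_span {Φ : RootSys n} (hnorm : ∀ δ ∈ Φ.roots, ⟪δ, δ⟫ = 2)
    {α β γ δ : Esp n} (h : Φ.IsA3Triple α β γ) (hδ : δ ∈ Φ.pos)
    (hδU : δ ∈ Submodule.span ℝ {α, β, γ}) :
    δ ∈ ({α, β, γ, α + β, β + γ, α + β + γ} : Finset (Esp n)) := by
  have hcoeff : ∀ t ∈ a3PosCoeffs, t.1 • α + t.2.1 • β + t.2.2 • γ ∈
      ({α, β, γ, α + β, β + γ, α + β + γ} : Finset (Esp n)) := by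
    simp [a3PosCoeffs]
  have hcartan : ∀ ε ∈ Φ.pos, ∃ k : ℤ, (k : ℝ) = ⟪ε, δ⟫ := fun ε hε => by
    obtain ⟨k, hk⟩ := Φ.crystal ε (Φ.pos_subset hε) δ (Φ.pos_subset hδ)
    exact ⟨k, by rw [← hk, hnorm ε (Φ.pos_subset hε)]; ring⟩
  obtain ⟨p, hp⟩ := hcartan α h.left_mem
  obtain ⟨q, hq⟩ := hcartan β h.mid_mem
  obtain ⟨r, hr⟩ := hcartan γ h.right_mem
  have hδδ := hnorm δ (Φ.pos_subset hδ)
  obtain ⟨a, b, c, rfl⟩ := Submodule.mem_span_triple.1 hδU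
  rw [inner_add_left, inner_add_left, real_inner_smul_left, real_inner_smul_left,
    real_inner_smul_left, ← hp, ← hq, ← hr] at hδδ
  have hαα := hnorm α (Φ.pos_subset h.left_mem)
  have hββ := hnorm β (Φ.pos_subset h.mid_mem)
  have hγγ := hnorm γ (Φ.pos_subset h.right_mem)
  have hβα : ⟪β, α⟫ = -1 := by rw [real_inner_comm, h.inner_left_mid]
  have hγβ : ⟪γ, β⟫ = -1 := by rw [real_inner_comm, h.inner_mid_right]
  have hγα : ⟪γ, α⟫ = 0 := by rw [real_inner_comm, h.inner_left_right]
  simp only [inner_add_right, real_inner_smul_right, hαα, hββ, hγγ, h.inner_left_mid,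
    h.inner_mid_right, h.inner_left_right, hβα, hγβ, hγα] at hp hq hr
  rcases mem_a3PosCoeffs_or_neg_mem (by linarith) (by linarith) (by linarith) hδδ
    with hpos | hneg
  · exact hcoeff _ hpos
  · have := h.subset_pos hnorm (hcoeff _ hneg)
    simp only [neg_smul, ← neg_add] at this
    exact absurd this ((Φ.pos_iff _ (Φ.pos_subset hδ)).1 hδ)

theorem IsA3Triple.containsA3Pattern {Φ : RootSys n} (hnorm : ∀ δ ∈ Φ.roots, ⟪δ, δ⟫ = 2)
    {w : Esp n ≃ₗᵢ[ℝ] Esp n} {α β γ : Esp n} (h : Φ.IsA3Triple α β γ)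
    (hpattern :
      ({α, β, γ, α + β, β + γ, α + β + γ} : Finset (Esp n)).filter (· ∈ Φ.invSet w) =
        {β, α + β, β + γ} ∨
      ({α, β, γ, α + β, β + γ, α + β + γ} : Finset (Esp n)).filter (· ∈ Φ.invSet w) =
        {α, γ, α + β + γ}) :
    Φ.ContainsA3Pattern w := by
  set U := Submodule.span ℝ ({α, β, γ} : Set (Esp n))
  have hαU : α ∈ U := Submodule.subset_span (by simp)
  have hβU : β ∈ U := Submodule.subset_span (by simp)
  have hγU : γ ∈ U := Submodule.subset_span (by simp)
  have hU : Φ.pos.filter (· ∈ U) = {α, β, γ, α + β, β + γ, α + β + γ} := by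
    ext δ
    rw [Finset.mem_filter]
    refine ⟨fun hδ => h.mem_of_mem_span hnorm hδ.1 hδ.2, fun hδ => ⟨h.subset_pos hnorm hδ, ?_⟩⟩
    simp only [Finset.mem_insert, Finset.mem_singleton] at hδ
    rcases hδ with rfl | rfl | rfl | rfl | rfl | rfl <;> simp [U.add_mem, *]
  have hinv : (Φ.invSet w).filter (· ∈ U) = (Φ.pos.filter (· ∈ U)).filter (· ∈ Φ.invSet w) := by
    ext δ
    simp only [invSet, Finset.mem_filter]
    tauto
  refine ⟨U, α, β, γ, h.linearIndependent hnorm, hU, ?_⟩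
  rwa [hinv, hU]

end RootSys

theorem a3_color_propagation_general {n : ℕ} (Φ : RootSys n)
    (hnorm : ∀ α ∈ Φ.roots, (inner ℝ α α : ℝ) = 2)
    (w : Esp n ≃ₗᵢ[ℝ] Esp n) (hw : w ∈ Φ.weylGroup)
    (havoid : ¬ Φ.ContainsA3Pattern w)
    (α β γ : Esp n) (hα : α ∈ Φ.pos) (hβ : β ∈ Φ.pos) (hγ : γ ∈ Φ.pos)
    (hab : (inner ℝ α β : ℝ) = -1) (hbc : (inner ℝ β γ : ℝ) = -1)
    (hac : (inner ℝ α γ : ℝ) = 0) :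
    ((β ∈ Φ.invSet w ∧ α + β ∈ Φ.invSet w ∧ β + γ ∈ Φ.invSet w) →
        α + β + γ ∈ Φ.invSet w) ∧
    ((β ∉ Φ.invSet w ∧ α + β ∉ Φ.invSet w ∧ β + γ ∉ Φ.invSet w) →
        α + β + γ ∉ Φ.invSet w) := by
  have hA3 : Φ.IsA3Triple α β γ := ⟨hα, hβ, hγ, hab, hbc, hac⟩
  have hpos := hA3.subset_pos hnorm
  have hαβ : α + β ∈ Φ.pos := hpos (by simp)
  have hβγ : β + γ ∈ Φ.pos := hpos (by simp)
  have hαβγ : α + β + γ ∈ Φ.roots := Φ.pos_subset (hpos (by simp))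
  have hαβγ' : α + (β + γ) ∈ Φ.roots := add_assoc α β γ ▸ hαβγ
  refine ⟨fun ⟨hβw, hαβw, hβγw⟩ => ?_, fun ⟨hβw, hαβw, hβγw⟩ hαβγw => ?_⟩
  · by_contra hαβγw
    have hαw : α ∉ Φ.invSet w := fun hαw =>
      hαβγw (add_assoc α β γ ▸ RootSys.add_mem_invSet hw hαw hβγw hαβγ')
    have hγw : γ ∉ Φ.invSet w := fun hγw => hαβγw (RootSys.add_mem_invSet hw hαβw hγw hαβγ)
    refine havoid (hA3.containsA3Pattern hnorm (Or.inl ?_))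
    simp [Finset.filter_insert, Finset.filter_singleton, *]
  · have hαw : α ∈ Φ.invSet w := by
      by_contra hαw
      exact RootSys.add_notMem_invSet hw hα hβγ hαw hβγw hαβγ' (add_assoc α β γ ▸ hαβγw)
    have hγw : γ ∈ Φ.invSet w := by
      by_contra hγw
      exact RootSys.add_notMem_invSet hw hαβ hγ hαβw hγw hαβγ hαβγw
    refine havoid (hA3.containsA3Pattern hnorm (Or.inr ?_))
    simp [Finset.filter_insert, Finset.filter_singleton, *]

/-- **Lemma.** Let `Φ` be simply laced (roots normalized to squared length `2`) and
irreducible, and let `w` avoid `3142` and `2413`.  If `α, β, γ ∈ Φ⁺` span a type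
`A₃` subsystem as simple roots in this order, and `β`, `α+β`, `β+γ` all have the
same color with respect to `w`, then `α+β+γ` has that color as well. -/
theorem a3_color_propagation {n : ℕ} (Φ : RootSys n)
    (hnorm : ∀ α ∈ Φ.roots, (inner ℝ α α : ℝ) = 2) (hirr : Φ.IsIrreducible)
    (w : Esp n ≃ₗᵢ[ℝ] Esp n) (hw : w ∈ Φ.weylGroup)
    (havoid : ¬ Φ.ContainsA3Pattern w)
    (α β γ : Esp n) (hα : α ∈ Φ.pos) (hβ : β ∈ Φ.pos) (hγ : γ ∈ Φ.pos)
    (hab : (inner ℝ α β : ℝ) = -1) (hbc : (inner ℝ β γ : ℝ) = -1)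
    (hac : (inner ℝ α γ : ℝ) = 0) :
    ((β ∈ Φ.invSet w ∧ α + β ∈ Φ.invSet w ∧ β + γ ∈ Φ.invSet w) →
        α + β + γ ∈ Φ.invSet w) ∧
    ((β ∉ Φ.invSet w ∧ α + β ∉ Φ.invSet w ∧ β + γ ∉ Φ.invSet w) →
        α + β + γ ∉ Φ.invSet w) :=
  a3_color_propagation_general Φ hnorm w hw havoid α β γ hα hβ hγ hab hbc hac
end
end

section
/- Let Φ be a simply-laced irreducible finite crystallographic root system that is not of type A, let r ∈ Φ⁺ have full support (Supp(r) = Δ), and let α_i ∈ Δ be any simple root. Then at least one of the following holds: (1) r = β₁ + β₂ for some β₁, β₂ ∈ Φ⁺ with α_i ∈ Supp(β₁) and α_i ∈ Supp(β₂); or (2) r = α + β + γ for some α, β, γ ∈ Φ⁺ with (α,β) = (β,γ) = −1 and (α,γ) = 0 (so α, β, γ span a type A₃ subsystem as simple roots), and α_i ∈ Supp(β). -/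
open scoped Classical
open Polynomial
noncomputable section

/-!
Induct on the height of a positive root, measured by pairing with the sum of all positive roots,
which pairs to at least `2` with every positive root. The same functional shows that the simple
roots are linearly independent, so supports are well defined.

A non-simple positive root `u` whose support contains `αᵢ` has a simple root `j` with
`⟪u, j⟫ = 1` such that the support of `u - j` still contains `αᵢ`. Adding `j` back to a
decomposition of `u - j` of the first or the second kind gives one of these kinds for `u`. The only
remaining case is that `u - j` is the sum of an induced path of simple roots starting at `αᵢ`; then
`j` is adjacent to exactly one vertex of the path, and either extends the path or produces a
decomposition of the second kind. Finally, a path sum cannot have full support when the Dynkin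
diagram has a branch vertex.
-/

open Finset RealInnerProductSpace

theorem Finset.induction_on_measure {α β : Type*} [LinearOrder β] {s : Finset α} {f : α → β}
    {P : (a : α) → a ∈ s → Prop}
    (h : ∀ a ha, (∀ b hb, f b < f a → P b hb) → P a ha) (a : α) (ha : a ∈ s) : P a ha := by
  induction hn : #(s.filter (f · < f a)) using Nat.strong_induction_on generalizing a with
  | _ n ih =>
    refine h a ha fun b hb hba => ih _ ?_ b hb rfl
    rw [← hn]
    refine card_lt_card ⟨fun c hc => ?_, fun hsub => ?_⟩
    · exact mem_filter.mpr ⟨(mem_filter.mp hc).1, (mem_filter.mp hc).2.trans hba⟩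
    · exact lt_irrefl _ (mem_filter.mp (hsub (mem_filter.mpr ⟨hb, hba⟩))).2

theorem rootReflection_apply {n : ℕ} (α v : Esp n) :
    rootReflection α v = v - (2 * ⟪α, v⟫ / ⟪α, α⟫) • α := by
  rw [rootReflection, Submodule.reflection_apply, Submodule.starProjection_orthogonal_val,
    Submodule.starProjection_singleton, real_inner_self_eq_norm_sq, RCLike.ofReal_real_eq_id,
    id_eq]
  match_scalars <;> ring

namespace RootSys

variable {n : ℕ} {Φ : RootSys n} {u v : Esp n}

def IsSimplyLaced (Φ : RootSys n) : Prop := ∀ α ∈ Φ.roots, ⟪α, α⟫ = 2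

-- Twice the Weyl vector.
def posSum (Φ : RootSys n) : Esp n := ∑ γ ∈ Φ.pos, γ

theorem neg_notMem_pos (hu : u ∈ Φ.pos) : -u ∉ Φ.pos :=
  (Φ.pos_iff u (Φ.pos_subset hu)).mp hu

theorem ne_neg_of_mem_pos (hu : u ∈ Φ.pos) (hv : v ∈ Φ.pos) : u ≠ -v :=
  fun h => neg_notMem_pos hv (h ▸ hu)

theorem neg_mem_pos_of_notMem_pos (hu : u ∈ Φ.roots) (h : u ∉ Φ.pos) : -u ∈ Φ.pos := by
  simpa using (Φ.pos_iff (-u) (Φ.neg_mem u hu)).mpr (by simpa using h)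

theorem mem_pos_of_mem_simples (hu : u ∈ Φ.simples) : u ∈ Φ.pos :=
  (mem_filter.mp hu).1

theorem exists_eq_add_of_notMem_simples (hu : u ∈ Φ.pos) (h : u ∉ Φ.simples) :
    ∃ v ∈ Φ.pos, ∃ w ∈ Φ.pos, u = v + w := by
  by_contra hc
  exact h (mem_filter.mpr ⟨hu, hc⟩)

theorem simple_eq_sum_ite {s : Esp n} (hs : s ∈ Φ.simples) :
    s = ∑ γ ∈ Φ.simples, (if γ = s then (1 : ℝ) else 0) • γ := by
  simp [ite_smul, hs]

namespace IsSimplyLaced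

theorem exists_inner_eq_intCast (hΦ : Φ.IsSimplyLaced) (hu : u ∈ Φ.roots) (hv : v ∈ Φ.roots) :
    ∃ k : ℤ, ⟪u, v⟫ = k := by
  obtain ⟨k, hk⟩ := Φ.crystal u hu v hv
  rw [hΦ u hu] at hk
  exact ⟨k, by linarith⟩

theorem inner_cases (hΦ : Φ.IsSimplyLaced) (hu : u ∈ Φ.roots) (hv : v ∈ Φ.roots) :
    ⟪u, v⟫ = -2 ∨ ⟪u, v⟫ = -1 ∨ ⟪u, v⟫ = 0 ∨ ⟪u, v⟫ = 1 ∨ ⟪u, v⟫ = 2 := by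
  obtain ⟨k, hk⟩ := hΦ.exists_inner_eq_intCast hu hv
  have hCS := real_inner_mul_inner_self_le u v
  rw [hΦ u hu, hΦ v hv, hk] at hCS
  have hk4 : k * k ≤ 4 := by exact_mod_cast hCS
  have : -2 ≤ k := by nlinarith
  have : k ≤ 2 := by nlinarith
  rw [hk]
  interval_cases k <;> norm_num

theorem eq_of_inner_eq_two (hΦ : Φ.IsSimplyLaced) (hu : u ∈ Φ.roots) (hv : v ∈ Φ.roots)
    (h : ⟪u, v⟫ = 2) : u = v := by
  have h0 : ⟪u - v, u - v⟫ = 0 := by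
    rw [inner_sub_sub_self, real_inner_comm u v, h, hΦ u hu, hΦ v hv]; norm_num
  exact sub_eq_zero.mp (inner_self_eq_zero.mp h0)

theorem eq_neg_of_inner_eq_neg_two (hΦ : Φ.IsSimplyLaced) (hu : u ∈ Φ.roots)
    (hv : v ∈ Φ.roots) (h : ⟪u, v⟫ = -2) : u = -v := by
  have h0 : ⟪u + v, u + v⟫ = 0 := by
    rw [inner_add_add_self, real_inner_comm u v, h, hΦ u hu, hΦ v hv]; norm_num
  exact add_eq_zero_iff_eq_neg.mp (inner_self_eq_zero.mp h0)

theorem inner_cases_of_ne (hΦ : Φ.IsSimplyLaced) (hu : u ∈ Φ.roots) (hv : v ∈ Φ.roots)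
    (hne : u ≠ v) (hne' : u ≠ -v) : ⟪u, v⟫ = -1 ∨ ⟪u, v⟫ = 0 ∨ ⟪u, v⟫ = 1 := by
  rcases hΦ.inner_cases hu hv with h | h | h | h | h
  · exact absurd (hΦ.eq_neg_of_inner_eq_neg_two hu hv h) hne'
  · exact Or.inl h
  · exact Or.inr (Or.inl h)
  · exact Or.inr (Or.inr h)
  · exact absurd (hΦ.eq_of_inner_eq_two hu hv h) hne

theorem inner_eq_neg_one_or_nonneg (hΦ : Φ.IsSimplyLaced) (hu : u ∈ Φ.pos) (hv : v ∈ Φ.pos) :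
    ⟪u, v⟫ = -1 ∨ 0 ≤ ⟪u, v⟫ := by
  have hur := Φ.pos_subset hu
  have hvr := Φ.pos_subset hv
  rcases hΦ.inner_cases hur hvr with h | h | h | h | h
  · exact absurd (hΦ.eq_neg_of_inner_eq_neg_two hur hvr h) (ne_neg_of_mem_pos hu hv)
  · exact Or.inl h
  all_goals exact Or.inr (by linarith)

theorem neg_one_le_inner (hΦ : Φ.IsSimplyLaced) (hu : u ∈ Φ.pos) (hv : v ∈ Φ.pos) :
    -1 ≤ ⟪u, v⟫ := by
  rcases hΦ.inner_eq_neg_one_or_nonneg hu hv with h | h <;> linarith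

theorem add_mem_roots (hΦ : Φ.IsSimplyLaced) (hu : u ∈ Φ.roots) (hv : v ∈ Φ.roots)
    (h : ⟪u, v⟫ = -1) : u + v ∈ Φ.roots := by
  have := Φ.reflect_mem u hu v hv
  rw [rootReflection_apply, h, hΦ u hu] at this
  convert this using 1
  module

theorem sub_mem_roots (hΦ : Φ.IsSimplyLaced) (hu : u ∈ Φ.roots) (hv : v ∈ Φ.roots)
    (h : ⟪u, v⟫ = 1) : u - v ∈ Φ.roots := by
  have := Φ.reflect_mem v hv u hu
  rw [rootReflection_apply, real_inner_comm, h, hΦ v hv] at this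
  convert this using 1
  module

theorem add_mem_pos (hΦ : Φ.IsSimplyLaced) (hu : u ∈ Φ.pos) (hv : v ∈ Φ.pos)
    (h : ⟪u, v⟫ = -1) : u + v ∈ Φ.pos :=
  Φ.pos_add u hu v hv (hΦ.add_mem_roots (Φ.pos_subset hu) (Φ.pos_subset hv) h)

theorem inner_ne_neg_one_of_inner_eq_neg_one (hΦ : Φ.IsSimplyLaced) {x : Esp n}
    (hu : u ∈ Φ.pos) (hv : v ∈ Φ.pos) (hx : x ∈ Φ.pos) (huv : ⟪u, v⟫ = -1)
    (hux : ⟪u, x⟫ = -1) : ⟪v, x⟫ ≠ -1 := by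
  intro hvx
  have hvx' := hΦ.add_mem_pos hv hx hvx
  have h2 : ⟪u, v + x⟫ = -2 := by rw [inner_add_right, huv, hux]; norm_num
  exact ne_neg_of_mem_pos hu hvx'
    (hΦ.eq_neg_of_inner_eq_neg_two (Φ.pos_subset hu) (Φ.pos_subset hvx') h2)

theorem inner_eq_zero_or_neg_one_of_mem_simples (hΦ : Φ.IsSimplyLaced) {s t : Esp n}
    (hs : s ∈ Φ.simples) (ht : t ∈ Φ.simples) (hne : s ≠ t) : ⟪s, t⟫ = 0 ∨ ⟪s, t⟫ = -1 := by
  have hsp := mem_pos_of_mem_simples hs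
  have htp := mem_pos_of_mem_simples ht
  rcases hΦ.inner_cases_of_ne (Φ.pos_subset hsp) (Φ.pos_subset htp) hne
    (ne_neg_of_mem_pos hsp htp) with h | h | h
  · exact Or.inr h
  · exact Or.inl h
  · have hsub := hΦ.sub_mem_roots (Φ.pos_subset hsp) (Φ.pos_subset htp) h
    by_cases hst : s - t ∈ Φ.pos
    · exact absurd ⟨t, htp, s - t, hst, by abel⟩ (mem_filter.mp hs).2
    · have hts : t - s ∈ Φ.pos := by simpa using neg_mem_pos_of_notMem_pos hsub hst
      exact absurd ⟨s, hsp, t - s, hts, by abel⟩ (mem_filter.mp ht).2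

theorem sub_mem_pos_of_inner_eq_one (hΦ : Φ.IsSimplyLaced) {s : Esp n} (hu : u ∈ Φ.pos)
    (hs : s ∈ Φ.simples) (h : ⟪u, s⟫ = 1) : u - s ∈ Φ.pos := by
  have hsp := mem_pos_of_mem_simples hs
  have hsub := hΦ.sub_mem_roots (Φ.pos_subset hu) (Φ.pos_subset hsp) h
  by_contra hus
  have hsu : s - u ∈ Φ.pos := by simpa using neg_mem_pos_of_notMem_pos hsub hus
  exact (mem_filter.mp hs).2 ⟨u, hu, s - u, hsu, by abel⟩

theorem two_le_inner_posSum (hΦ : Φ.IsSimplyLaced) (hu : u ∈ Φ.pos) :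
    2 ≤ ⟪Φ.posSum, u⟫ := by
  set S := Φ.pos.erase u
  have hsplit : ⟪Φ.posSum, u⟫ = 2 + ∑ γ ∈ S, ⟪γ, u⟫ := by
    rw [posSum, sum_inner, ← add_sum_erase _ _ hu, hΦ u (Φ.pos_subset hu)]
  have hS : ∀ γ ∈ S, γ ∈ Φ.pos ∧ γ ≠ u := fun γ hγ =>
    ⟨mem_of_mem_erase hγ, ne_of_mem_erase hγ⟩
  have hcount : ∑ γ ∈ S, ⟪γ, u⟫ =
      (#(S.filter (⟪·, u⟫ = 1)) : ℝ) - #(S.filter (⟪·, u⟫ = -1)) := by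
    rw [natCast_card_filter, natCast_card_filter, ← sum_sub_distrib]
    refine sum_congr rfl fun γ hγ => ?_
    rcases hΦ.inner_cases_of_ne (Φ.pos_subset (hS γ hγ).1) (Φ.pos_subset hu) (hS γ hγ).2
      (ne_neg_of_mem_pos (hS γ hγ).1 hu) with h | h | h <;> norm_num [h]
  -- `γ ↦ γ + u` maps the roots pairing to `-1` with `u` injectively to those pairing to `1`.
  have hinj : #(S.filter (⟪·, u⟫ = -1)) ≤ #(S.filter (⟪·, u⟫ = 1)) := by
    refine card_le_card_of_injOn (· + u) (fun γ hγ => ?_)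
      (fun _ _ _ _ h => add_right_cancel h)
    obtain ⟨hγS, hγu⟩ := mem_filter.mp hγ
    have hγu' : ⟪γ + u, u⟫ = 1 := by
      rw [inner_add_left, hγu, hΦ u (Φ.pos_subset hu)]; norm_num
    refine mem_filter.mpr ⟨mem_erase.mpr ⟨fun h => ?_, ?_⟩, hγu'⟩
    · rw [add_eq_right.mp h, inner_zero_left] at hγu
      norm_num at hγu
    · exact hΦ.add_mem_pos (hS γ hγS).1 hu hγu
  have : (#(S.filter (⟪·, u⟫ = -1)) : ℝ) ≤ #(S.filter (⟪·, u⟫ = 1)) := by exact_mod_cast hinj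
  linarith

theorem coeff_nonpos_of_sum_smul_eq_zero (hΦ : Φ.IsSimplyLaced) {c : Esp n → ℝ}
    (h : ∑ γ ∈ Φ.simples, c γ • γ = 0) : ∀ γ ∈ Φ.simples, c γ ≤ 0 := by
  -- The positive part `x` is minus the rest; distinct simple roots pair nonpositively, so
  -- `⟪x, x⟫ ≤ 0`. Then `x = 0` pairs to zero with `posSum`, forcing the positive part to vanish.
  set P := Φ.simples.filter (0 < c ·)
  set Q := Φ.simples.filter (¬ 0 < c ·)
  set x := ∑ γ ∈ P, c γ • γ
  have hx : x = -∑ δ ∈ Q, c δ • δ := by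
    rw [eq_neg_iff_add_eq_zero, sum_filter_add_sum_filter_not, h]
  have hxx : ⟪x, x⟫ ≤ 0 := by
    nth_rewrite 2 [hx]
    simp only [x, inner_neg_right, sum_inner, inner_sum, neg_nonpos]
    refine sum_nonneg fun δ hδ => sum_nonneg fun γ hγ => ?_
    obtain ⟨hγs, hγc⟩ := mem_filter.mp hγ
    obtain ⟨hδs, hδc⟩ := mem_filter.mp hδ
    have hne : γ ≠ δ := fun h => hδc (h ▸ hγc)
    rw [real_inner_smul_left, real_inner_smul_right]
    rcases hΦ.inner_eq_zero_or_neg_one_of_mem_simples hγs hδs hne with h' | h' <;> rw [h'] <;>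
      nlinarith [not_lt.mp hδc]
  have hx0 : x = 0 := inner_self_eq_zero.mp (le_antisymm hxx real_inner_self_nonneg)
  have hρx : ∑ γ ∈ P, c γ * ⟪Φ.posSum, γ⟫ = 0 := by
    have : ⟪Φ.posSum, x⟫ = 0 := by rw [hx0, inner_zero_right]
    simpa [x, inner_sum, real_inner_smul_right] using this
  intro γ hγ
  by_contra! hcγ
  have : 0 < ∑ γ ∈ P, c γ * ⟪Φ.posSum, γ⟫ := by
    refine sum_pos (fun δ hδ => ?_) ⟨γ, mem_filter.mpr ⟨hγ, hcγ⟩⟩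
    obtain ⟨hδs, hδc⟩ := mem_filter.mp hδ
    nlinarith [hΦ.two_le_inner_posSum (mem_pos_of_mem_simples hδs)]
  linarith

theorem coeff_eq_zero_of_sum_smul_eq_zero (hΦ : Φ.IsSimplyLaced) {c : Esp n → ℝ}
    (h : ∑ γ ∈ Φ.simples, c γ • γ = 0) : ∀ γ ∈ Φ.simples, c γ = 0 := by
  have h' : ∑ γ ∈ Φ.simples, (-c) γ • γ = 0 := by simp [neg_smul, h]
  exact fun γ hγ => le_antisymm (hΦ.coeff_nonpos_of_sum_smul_eq_zero h γ hγ)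
    (neg_nonpos.mp (hΦ.coeff_nonpos_of_sum_smul_eq_zero h' γ hγ))

theorem coeff_eq_of_sum_smul_eq (hΦ : Φ.IsSimplyLaced) {a b : Esp n → ℝ}
    (h : ∑ γ ∈ Φ.simples, a γ • γ = ∑ γ ∈ Φ.simples, b γ • γ) :
    ∀ γ ∈ Φ.simples, a γ = b γ := by
  have h' : ∑ γ ∈ Φ.simples, (a - b) γ • γ = 0 := by
    simp [sub_smul, sum_sub_distrib, h]
  exact fun γ hγ => sub_eq_zero.mp (hΦ.coeff_eq_zero_of_sum_smul_eq_zero h' γ hγ)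

theorem inner_posSum_lt_add (hΦ : Φ.IsSimplyLaced) (hv : v ∈ Φ.pos) :
    ⟪Φ.posSum, u⟫ < ⟪Φ.posSum, u + v⟫ := by
  rw [inner_add_right]
  linarith [hΦ.two_le_inner_posSum hv]

theorem exists_nonneg_coeffs (hΦ : Φ.IsSimplyLaced) (hu : u ∈ Φ.pos) :
    ∃ c : Esp n → ℝ, (∀ γ, 0 ≤ c γ) ∧ u = ∑ γ ∈ Φ.simples, c γ • γ := by
  induction u, hu using Finset.induction_on_measure (f := (⟪Φ.posSum, ·⟫)) with
  | h u hu ih =>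
    by_cases hus : u ∈ Φ.simples
    · exact ⟨fun γ => if γ = u then 1 else 0, fun γ => by dsimp only; split_ifs <;> norm_num,
        simple_eq_sum_ite hus⟩
    obtain ⟨v, hv, w, hw, rfl⟩ := exists_eq_add_of_notMem_simples hu hus
    obtain ⟨a, ha, hva⟩ := ih v hv (hΦ.inner_posSum_lt_add hw)
    obtain ⟨b, hb, hwb⟩ := ih w hw (by rw [add_comm]; exact hΦ.inner_posSum_lt_add hv)
    exact ⟨a + b, fun γ => add_nonneg (ha γ) (hb γ), by
      simp [add_smul, sum_add_distrib, ← hva, ← hwb]⟩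

end IsSimplyLaced

theorem sum_eq_sum_card_smul {ι : Type*} (s : Finset ι) {w : ι → Esp n}
    (hw : ∀ k ∈ s, w k ∈ Φ.simples) :
    ∑ k ∈ s, w k = ∑ γ ∈ Φ.simples, (#(s.filter (w · = γ)) : ℝ) • γ := by
  rw [← sum_fiberwise_of_maps_to' hw (fun γ => γ)]
  simp [Nat.cast_smul_eq_nsmul]

theorem suppContains_self {s : Esp n} (hs : s ∈ Φ.simples) : Φ.SuppContains s s :=
  ⟨_, simple_eq_sum_ite hs, by simp⟩

theorem suppContains_sub_of_coeff_ne {αi s : Esp n} {c : Esp n → ℝ}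
    (hc : u = ∑ γ ∈ Φ.simples, c γ • γ) (hs : s ∈ Φ.simples)
    (h : c αi ≠ if αi = s then 1 else 0) : Φ.SuppContains αi (u - s) := by
  refine ⟨fun γ => c γ - if γ = s then 1 else 0, ?_, sub_ne_zero.mpr h⟩
  nth_rewrite 1 [hc, simple_eq_sum_ite hs]
  simp [sub_smul, sum_sub_distrib]

namespace SuppContains

variable {αi : Esp n}

theorem sub_simple {s : Esp n} (h : Φ.SuppContains αi u) (hs : s ∈ Φ.simples) (hne : s ≠ αi) :
    Φ.SuppContains αi (u - s) := by
  obtain ⟨c, hc, hcαi⟩ := h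
  exact suppContains_sub_of_coeff_ne hc hs (by rwa [if_neg (Ne.symm hne)])

theorem coeff_pos (h : Φ.SuppContains αi u) (hΦ : Φ.IsSimplyLaced) (hαi : αi ∈ Φ.simples)
    {c : Esp n → ℝ} (hc0 : ∀ γ, 0 ≤ c γ) (hc : u = ∑ γ ∈ Φ.simples, c γ • γ) : 0 < c αi := by
  obtain ⟨c', hc', hc'αi⟩ := h
  have := hΦ.coeff_eq_of_sum_smul_eq (hc.symm.trans hc') αi hαi
  exact (hc0 αi).lt_of_ne (this ▸ hc'αi).symm

theorem add (h : Φ.SuppContains αi u) (hΦ : Φ.IsSimplyLaced) (hαi : αi ∈ Φ.simples)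
    (hu : u ∈ Φ.pos) (hv : v ∈ Φ.pos) : Φ.SuppContains αi (u + v) := by
  obtain ⟨a, ha, hua⟩ := hΦ.exists_nonneg_coeffs hu
  obtain ⟨b, hb, hvb⟩ := hΦ.exists_nonneg_coeffs hv
  refine ⟨a + b, by simp [add_smul, sum_add_distrib, ← hua, ← hvb], ?_⟩
  exact (add_pos_of_pos_of_nonneg (h.coeff_pos hΦ hαi ha hua) (hb αi)).ne'

theorem eq_of_mem_simples (h : Φ.SuppContains αi u) (hΦ : Φ.IsSimplyLaced)
    (hαi : αi ∈ Φ.simples) (hu : u ∈ Φ.simples) : u = αi := by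
  obtain ⟨c, hc, hcαi⟩ := h
  have := hΦ.coeff_eq_of_sum_smul_eq ((simple_eq_sum_ite hu).symm.trans hc) αi hαi
  by_contra hne
  rw [if_neg (Ne.symm hne)] at this
  exact hcαi this.symm

end SuppContains

namespace IsSimplyLaced

theorem suppContains_sum_iff (hΦ : Φ.IsSimplyLaced) {ι : Type*} {s : Finset ι}
    {w : ι → Esp n} (hw : ∀ k ∈ s, w k ∈ Φ.simples) {αi : Esp n} (hαi : αi ∈ Φ.simples) :
    Φ.SuppContains αi (∑ k ∈ s, w k) ↔ ∃ k ∈ s, w k = αi := by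
  rw [sum_eq_sum_card_smul s hw]
  constructor
  · rintro ⟨c, hc, hcαi⟩
    rw [← hΦ.coeff_eq_of_sum_smul_eq hc αi hαi, Nat.cast_ne_zero, ← pos_iff_ne_zero,
      card_pos] at hcαi
    obtain ⟨k, hk⟩ := hcαi
    exact ⟨k, (mem_filter.mp hk).1, (mem_filter.mp hk).2⟩
  · rintro ⟨k, hk, hkαi⟩
    refine ⟨_, rfl, ?_⟩
    have : 0 < #(s.filter (w · = αi)) := card_pos.mpr ⟨k, mem_filter.mpr ⟨hk, hkαi⟩⟩
    positivity

theorem exists_inner_eq_ite_of_sum_inner_eq_neg_one (hΦ : Φ.IsSimplyLaced) {ι : Type*}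
    [DecidableEq ι] {s : Finset ι} {w : ι → Esp n} {x : Esp n} (hw : ∀ k ∈ s, w k ∈ Φ.simples)
    (hx : x ∈ Φ.simples) (hne : ∀ k ∈ s, x ≠ w k) (hsum : ∑ k ∈ s, ⟪x, w k⟫ = -1) :
    ∃ k₀ ∈ s, ∀ k ∈ s, ⟪x, w k⟫ = if k = k₀ then -1 else 0 := by
  have hterm : ∀ k ∈ s, ⟪x, w k⟫ = -if ⟪x, w k⟫ = -1 then 1 else 0 := fun k hk => by
    rcases hΦ.inner_eq_zero_or_neg_one_of_mem_simples hx (hw k hk) (hne k hk) with h | h <;>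
      simp [h]
  have hcard : #(s.filter (⟪x, w ·⟫ = -1)) = 1 := by
    rw [sum_congr rfl hterm, sum_neg_distrib, ← natCast_card_filter] at hsum
    exact_mod_cast neg_inj.mp hsum
  obtain ⟨k₀, hk₀⟩ := card_eq_one.mp hcard
  have hiff : ∀ k ∈ s, ⟪x, w k⟫ = -1 ↔ k = k₀ := fun k hk => by
    simpa [hk] using Finset.ext_iff.mp hk₀ k
  refine ⟨k₀, (mem_filter.mp (hk₀ ▸ mem_singleton_self k₀)).1, fun k hk => ?_⟩
  split_ifs with h
  · exact (hiff k hk).mpr h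
  · rcases hΦ.inner_eq_zero_or_neg_one_of_mem_simples hx (hw k hk) (hne k hk) with h' | h'
    · exact h'
    · exact absurd ((hiff k hk).mp h') h

theorem exists_inner_eq_one_suppContains_sub (hΦ : Φ.IsSimplyLaced) {αi : Esp n}
    (hαi : αi ∈ Φ.simples) (hu : u ∈ Φ.pos) (hus : u ∉ Φ.simples)
    (hsupp : Φ.SuppContains αi u) :
    ∃ j ∈ Φ.simples, ⟪u, j⟫ = 1 ∧ Φ.SuppContains αi (u - j) := by
  obtain ⟨c, hc0, hc⟩ := hΦ.exists_nonneg_coeffs hu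
  have hcαi := hsupp.coeff_pos hΦ hαi hc0 hc
  by_contra! H
  -- Otherwise only `αi` can contribute to `⟪u, u⟫ = ∑ γ, c γ * ⟪γ, u⟫`, and by at most `1`.
  have hbound : ∀ γ ∈ Φ.simples, c γ * ⟪γ, u⟫ ≤ if γ = αi then 1 else 0 := by
    intro γ hγ
    have hγp := mem_pos_of_mem_simples hγ
    rcases hΦ.inner_cases_of_ne (Φ.pos_subset hγp) (Φ.pos_subset hu) (fun h => hus (h ▸ hγ))
      (ne_neg_of_mem_pos hγp hu) with h | h | h
    · rw [h]; split_ifs <;> nlinarith [hc0 γ]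
    · rw [h, mul_zero]; split_ifs <;> norm_num
    · have hcγ : c αi = if αi = γ then 1 else 0 := by
        by_contra hne
        exact H γ hγ (by rwa [real_inner_comm]) (suppContains_sub_of_coeff_ne hc hγ hne)
      obtain rfl : γ = αi := by
        by_contra hne
        rw [if_neg (Ne.symm hne)] at hcγ
        linarith
      rw [if_pos rfl] at hcγ
      rw [h, hcγ, if_pos rfl, mul_one]
  have huu : ⟪u, u⟫ = ∑ γ ∈ Φ.simples, c γ * ⟪γ, u⟫ := by
    nth_rewrite 1 [hc]
    simp [sum_inner, real_inner_smul_left]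
  have := sum_le_sum hbound
  rw [← huu, hΦ u (Φ.pos_subset hu), sum_ite_eq' Φ.simples αi (fun _ => (1 : ℝ)),
    if_pos hαi] at this
  norm_num at this

end IsSimplyLaced

-- `w 0, …, w m` is an induced path in the Dynkin diagram.
structure IsSimplePath (Φ : RootSys n) (w : ℕ → Esp n) (m : ℕ) : Prop where
  mem_simples : ∀ k ≤ m, w k ∈ Φ.simples
  inner_succ : ∀ k < m, ⟪w k, w (k + 1)⟫ = -1
  inner_of_add_two_le : ∀ k l, l ≤ m → k + 2 ≤ l → ⟪w k, w l⟫ = 0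

namespace IsSimplePath

variable {w : ℕ → Esp n} {m : ℕ}

theorem inner_sum_Ico_adjacent (hw : Φ.IsSimplePath w m) {a b : ℕ} (hab : a < b) (hb : b ≤ m) :
    ⟪∑ k ∈ Ico a b, w k, w b⟫ = -1 := by
  rw [sum_inner, sum_eq_single_of_mem (b - 1) (mem_Ico.mpr ⟨by omega, by omega⟩)]
  · simpa [Nat.sub_add_cancel (by omega : 1 ≤ b)] using hw.inner_succ (b - 1) (by omega)
  · intro k hk hkb
    exact hw.inner_of_add_two_le k b hb (by have := mem_Ico.mp hk; omega)

theorem inner_sum_Ico_of_lt (hw : Φ.IsSimplePath w m) (a : ℕ) {b l : ℕ} (hbl : b < l)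
    (hl : l ≤ m) : ⟪∑ k ∈ Ico a b, w k, w l⟫ = 0 := by
  rw [sum_inner]
  exact sum_eq_zero fun k hk => hw.inner_of_add_two_le k l hl (by have := mem_Ico.mp hk; omega)

theorem sum_Ico_mem_pos (hw : Φ.IsSimplePath w m) (hΦ : Φ.IsSimplyLaced) {a b : ℕ}
    (hab : a < b) (hb : b ≤ m + 1) : ∑ k ∈ Ico a b, w k ∈ Φ.pos := by
  induction b, hab using Nat.le_induction with
  | base => simpa using mem_pos_of_mem_simples (hw.mem_simples a (by omega))
  | succ b hab ih =>
    rw [sum_Ico_succ_top (by omega)]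
    exact hΦ.add_mem_pos (ih (by omega)) (mem_pos_of_mem_simples (hw.mem_simples b (by omega)))
      (hw.inner_sum_Ico_adjacent hab (by omega))

theorem inner_sum_Ico_sum_Ico (hw : Φ.IsSimplePath w m) {a b c : ℕ} (hab : a < b) (hbc : b < c)
    (hc : c ≤ m + 1) : ⟪∑ k ∈ Ico a b, w k, ∑ l ∈ Ico b c, w l⟫ = -1 := by
  rw [inner_sum, sum_eq_single_of_mem b (mem_Ico.mpr ⟨le_rfl, hbc⟩)]
  · exact hw.inner_sum_Ico_adjacent hab (by omega)
  · intro l hl hlb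
    have := mem_Ico.mp hl
    exact hw.inner_sum_Ico_of_lt a (by omega) (by omega)

theorem neg_one_le_inner_sum_Ico (hw : Φ.IsSimplePath w m) (hΦ : Φ.IsSimplyLaced)
    (hu : u ∈ Φ.pos) {a b : ℕ} (hb : b ≤ m + 1) : -1 ≤ ⟪u, ∑ k ∈ Ico a b, w k⟫ := by
  rcases lt_or_ge a b with hab | hab
  · exact hΦ.neg_one_le_inner hu (hw.sum_Ico_mem_pos hΦ hab hb)
  · rw [Ico_eq_empty_of_le hab, sum_empty, inner_zero_right]
    norm_num

theorem inner_sum_range_nonneg (hw : Φ.IsSimplePath w m) (hΦ : Φ.IsSimplyLaced) {p : ℕ}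
    (hp : p ≤ m) : 0 ≤ ⟪w p, ∑ k ∈ range (m + 1), w k⟫ := by
  have hwp := mem_pos_of_mem_simples (hw.mem_simples p hp)
  rw [range_eq_Ico, ← sum_Ico_consecutive _ (Nat.zero_le p) (by omega : p ≤ m + 1),
    sum_eq_sum_Ico_succ_bot (by omega : p < m + 1), inner_add_right, inner_add_right,
    hΦ _ (Φ.pos_subset hwp)]
  linarith [hw.neg_one_le_inner_sum_Ico hΦ hwp (a := 0) (b := p) (by omega),
    hw.neg_one_le_inner_sum_Ico hΦ hwp (a := p + 1) (b := m + 1) le_rfl]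

theorem update (hw : Φ.IsSimplePath w m) {x : Esp n} (hx : x ∈ Φ.simples)
    (hmx : ⟪w m, x⟫ = -1) (hkx : ∀ k < m, ⟪w k, x⟫ = 0) :
    Φ.IsSimplePath (Function.update w (m + 1) x) (m + 1) where
  mem_simples k hk := by
    rcases Nat.le_succ_iff.mp hk with hk | rfl
    · rw [Function.update_of_ne (by omega)]; exact hw.mem_simples k hk
    · rwa [Function.update_self]
  inner_succ k hk := by
    rw [Function.update_of_ne (by omega)]
    rcases Nat.lt_succ_iff_lt_or_eq.mp hk with hk | rfl
    · rw [Function.update_of_ne (by omega)]; exact hw.inner_succ k hk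
    · rwa [Function.update_self]
  inner_of_add_two_le k l hl hkl := by
    rw [Function.update_of_ne (by omega)]
    rcases Nat.le_succ_iff.mp hl with hl | rfl
    · rw [Function.update_of_ne (by omega)]; exact hw.inner_of_add_two_le k l hl hkl
    · rw [Function.update_self]; exact hkx k (by omega)

theorem card_filter_inner_ne_zero_le_two (hw : Φ.IsSimplePath w m)
    (hcover : ∀ γ ∈ Φ.simples, ∃ k ≤ m, w k = γ) {δ : Esp n} (hδ : δ ∈ Φ.simples) :
    #(Φ.simples.filter (fun γ => γ ≠ δ ∧ ⟪γ, δ⟫ ≠ 0)) ≤ 2 := by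
  obtain ⟨p, hp, rfl⟩ := hcover δ hδ
  refine (card_le_card fun γ hγ => ?_).trans (card_le_two (a := w (p - 1)) (b := w (p + 1)))
  obtain ⟨hγs, hγp, hγip⟩ := mem_filter.mp hγ
  obtain ⟨q, hq, rfl⟩ := hcover γ hγs
  rcases lt_trichotomy q p with hqp | rfl | hqp
  · have : q = p - 1 := by
      by_contra hne
      exact hγip (hw.inner_of_add_two_le q p hp (by omega))
    simp [this]
  · exact absurd rfl hγp
  · have : q = p + 1 := by
      by_contra hne
      exact hγip (by rw [real_inner_comm]; exact hw.inner_of_add_two_le p q hq (by omega))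
    simp [this]

end IsSimplePath

def IsSumOfTwo (Φ : RootSys n) (αi u : Esp n) : Prop :=
  ∃ β₁ ∈ Φ.pos, ∃ β₂ ∈ Φ.pos, u = β₁ + β₂ ∧ Φ.SuppContains αi β₁ ∧ Φ.SuppContains αi β₂

def IsSumOfA3 (Φ : RootSys n) (αi u : Esp n) : Prop :=
  ∃ α ∈ Φ.pos, ∃ β ∈ Φ.pos, ∃ γ ∈ Φ.pos,
    ⟪α, β⟫ = -1 ∧ ⟪β, γ⟫ = -1 ∧ ⟪α, γ⟫ = 0 ∧ u = α + β + γ ∧ Φ.SuppContains αi β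

def IsPathSum (Φ : RootSys n) (αi u : Esp n) : Prop :=
  ∃ m w, Φ.IsSimplePath w m ∧ u = ∑ k ∈ range (m + 1), w k ∧ w 0 = αi

variable {αi s : Esp n}

theorem IsSumOfTwo.add_simple (h : Φ.IsSumOfTwo αi u) (hΦ : Φ.IsSimplyLaced)
    (hαi : αi ∈ Φ.simples) (hs : s ∈ Φ.simples) (hsu : ⟪s, u⟫ = -1) :
    Φ.IsSumOfTwo αi (u + s) := by
  obtain ⟨β₁, hβ₁, β₂, hβ₂, rfl, h₁, h₂⟩ := h
  have hsp := mem_pos_of_mem_simples hs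
  rw [inner_add_right] at hsu
  rcases hΦ.inner_eq_neg_one_or_nonneg hsp hβ₁ with hs₁ | hs₁
  · refine ⟨β₁ + s, hΦ.add_mem_pos hβ₁ hsp (by rwa [real_inner_comm]), β₂, hβ₂, by abel,
      h₁.add hΦ hαi hβ₁ hsp, h₂⟩
  · have hs₂ : ⟪s, β₂⟫ = -1 := le_antisymm (by linarith) (hΦ.neg_one_le_inner hsp hβ₂)
    refine ⟨β₁, hβ₁, β₂ + s, hΦ.add_mem_pos hβ₂ hsp (by rwa [real_inner_comm]), by abel,
      h₁, h₂.add hΦ hαi hβ₂ hsp⟩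

theorem IsSimplyLaced.isSumOfTwo_or_isSumOfA3_of_adj_ends (hΦ : Φ.IsSimplyLaced)
    (hαi : αi ∈ Φ.simples) {α β γ : Esp n} (hα : α ∈ Φ.pos) (hβ : β ∈ Φ.pos) (hγ : γ ∈ Φ.pos)
    (hαβ : ⟪α, β⟫ = -1) (hβγ : ⟪β, γ⟫ = -1) (hαγ : ⟪α, γ⟫ = 0) (hβi : Φ.SuppContains αi β)
    (hs : s ∈ Φ.simples) (hsα : ⟪s, α⟫ = -1) (hsβ : ⟪s, β⟫ = 1) (hsγ : ⟪s, γ⟫ = -1) :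
    Φ.IsSumOfTwo αi (α + β + γ + s) ∨ Φ.IsSumOfA3 αi (α + β + γ + s) := by
  have hsp := mem_pos_of_mem_simples hs
  have hss : ⟪s, s⟫ = 2 := hΦ s (Φ.pos_subset hsp)
  have hαs : α + s ∈ Φ.pos := hΦ.add_mem_pos hα hsp (by rwa [real_inner_comm])
  by_cases hαi' : Φ.SuppContains αi α ∨ s = αi
  · left
    refine ⟨α + s, hαs, β + γ, hΦ.add_mem_pos hβ hγ hβγ, by abel, ?_, hβi.add hΦ hαi hβ hγ⟩
    rcases hαi' with hαi' | rfl
    · exact hαi'.add hΦ hαi hα hsp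
    · rw [add_comm]; exact (suppContains_self hs).add hΦ hs hsp hα
  · right
    obtain ⟨-, hsαi⟩ := not_or.mp hαi'
    refine ⟨α + s, hαs, β - s, hΦ.sub_mem_pos_of_inner_eq_one hβ hs (by rwa [real_inner_comm]),
      γ + s, hΦ.add_mem_pos hγ hsp (by rwa [real_inner_comm]), ?_, ?_, ?_, by abel,
      hβi.sub_simple hs hsαi⟩ <;>
    simp only [inner_add_left, inner_add_right, inner_sub_left, inner_sub_right] <;>
    linarith [real_inner_comm s α, real_inner_comm s β, real_inner_comm s γ]

theorem IsSumOfA3.add_simple (h : Φ.IsSumOfA3 αi u) (hΦ : Φ.IsSimplyLaced)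
    (hαi : αi ∈ Φ.simples) (hs : s ∈ Φ.simples) (hsu : ⟪s, u⟫ = -1) :
    Φ.IsSumOfTwo αi (u + s) ∨ Φ.IsSumOfA3 αi (u + s) := by
  obtain ⟨α, hα, β, hβ, γ, hγ, hαβ, hβγ, hαγ, rfl, hβi⟩ := h
  have hsp := mem_pos_of_mem_simples hs
  have hsum : ⟪s, α⟫ + ⟪s, β⟫ + ⟪s, γ⟫ = -1 := by simpa only [inner_add_right] using hsu
  have hcomm := fun x => real_inner_comm (F := Esp n) s x
  rcases hΦ.inner_eq_neg_one_or_nonneg hsp hβ with hsβ | hsβ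
  · have hsα : 0 ≤ ⟪s, α⟫ := (hΦ.inner_eq_neg_one_or_nonneg hsp hα).resolve_left fun h' =>
      hΦ.inner_ne_neg_one_of_inner_eq_neg_one hsp hβ hα hsβ h' (by rwa [real_inner_comm])
    have hsγ : 0 ≤ ⟪s, γ⟫ := (hΦ.inner_eq_neg_one_or_nonneg hsp hγ).resolve_left fun h' =>
      hΦ.inner_ne_neg_one_of_inner_eq_neg_one hsp hβ hγ hsβ h' hβγ
    right
    refine ⟨α, hα, β + s, hΦ.add_mem_pos hβ hsp (by rwa [real_inner_comm]), γ, hγ, ?_, ?_, hαγ,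
      by abel, hβi.add hΦ hαi hβ hsp⟩
    · rw [inner_add_right]; linarith [hcomm α]
    · rw [inner_add_left]; linarith [hcomm γ]
  rcases hΦ.inner_eq_neg_one_or_nonneg hsp hα with hsα | hsα
  · rcases hΦ.inner_eq_neg_one_or_nonneg hsp hγ with hsγ | hsγ
    · exact hΦ.isSumOfTwo_or_isSumOfA3_of_adj_ends hαi hα hβ hγ hαβ hβγ hαγ hβi hs hsα
        (by linarith) hsγ
    · right
      refine ⟨α + s, hΦ.add_mem_pos hα hsp (by rwa [real_inner_comm]), β, hβ, γ, hγ, ?_, hβγ, ?_,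
        by abel, hβi⟩
      · rw [inner_add_left]; linarith
      · rw [inner_add_left]; linarith
  · have hsγ : ⟪s, γ⟫ = -1 := le_antisymm (by linarith) (hΦ.neg_one_le_inner hsp hγ)
    right
    refine ⟨α, hα, β, hβ, γ + s, hΦ.add_mem_pos hγ hsp (by rwa [real_inner_comm]), hαβ, ?_, ?_,
      by abel, hβi⟩
    · rw [inner_add_right]; linarith [hcomm β]
    · rw [inner_add_right]; linarith [hcomm α]

theorem IsPathSum.add_simple (h : Φ.IsPathSum αi u) (hΦ : Φ.IsSimplyLaced)
    (hs : s ∈ Φ.simples) (hsu : ⟪s, u⟫ = -1) :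
    Φ.IsSumOfA3 αi (u + s) ∨ Φ.IsPathSum αi (u + s) := by
  obtain ⟨m, w, hw, rfl, hw0⟩ := h
  have hsp := mem_pos_of_mem_simples hs
  have hws : ∀ k ∈ range (m + 1), w k ∈ Φ.simples := fun k hk =>
    hw.mem_simples k (Nat.lt_succ_iff.mp (mem_range.mp hk))
  have hne : ∀ k ∈ range (m + 1), s ≠ w k := by
    rintro k hk rfl
    linarith [hw.inner_sum_range_nonneg hΦ (Nat.lt_succ_iff.mp (mem_range.mp hk))]
  obtain ⟨k₀, hk₀, hsw⟩ :=
    hΦ.exists_inner_eq_ite_of_sum_inner_eq_neg_one hws hs hne (by rwa [← inner_sum])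
  have hseg : ∀ a b, b ≤ m + 1 →
      ⟪s, ∑ k ∈ Ico a b, w k⟫ = if k₀ ∈ Ico a b then -1 else 0 := fun a b hb => by
    rw [inner_sum, sum_congr rfl fun k hk =>
      hsw k (mem_range.mpr (by have := mem_Ico.mp hk; omega)), sum_ite_eq']
  rcases Nat.lt_succ_iff_lt_or_eq.mp (mem_range.mp hk₀) with hk₀m | rfl
  · left
    refine ⟨s, hsp, ∑ k ∈ Ico 0 (k₀ + 1), w k, hw.sum_Ico_mem_pos hΦ (by omega) (by omega),
      ∑ k ∈ Ico (k₀ + 1) (m + 1), w k, hw.sum_Ico_mem_pos hΦ (by omega) le_rfl, ?_,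
      hw.inner_sum_Ico_sum_Ico (by omega) (by omega) le_rfl, ?_, ?_, ?_⟩
    · rw [hseg _ _ (by omega), if_pos (mem_Ico.mpr ⟨by omega, by omega⟩)]
    · rw [hseg _ _ le_rfl, if_neg (by simp)]
    · rw [range_eq_Ico, ← sum_Ico_consecutive _ (Nat.zero_le (k₀ + 1)) (by omega)]
      abel
    · refine (hΦ.suppContains_sum_iff (fun k hk => ?_) (hw0 ▸ hws 0 (by simp))).mpr
        ⟨0, by simp, hw0⟩
      exact hw.mem_simples k (by have := mem_Ico.mp hk; omega)
  · right
    refine ⟨k₀ + 1, Function.update w (k₀ + 1) s, hw.update hs ?_ fun k hk => ?_, ?_, ?_⟩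
    · rw [real_inner_comm, hsw k₀ hk₀, if_pos rfl]
    · rw [real_inner_comm, hsw k (mem_range.mpr (by omega)), if_neg (by omega)]
    · rw [sum_range_succ _ (k₀ + 1), Function.update_self]
      congr 1
      exact sum_congr rfl fun k hk =>
        (Function.update_of_ne (by have := mem_range.mp hk; omega) _ _).symm
    · rwa [Function.update_of_ne (by omega)]

theorem IsSimplyLaced.isSumOfTwo_or_isSumOfA3_or_isPathSum (hΦ : Φ.IsSimplyLaced)
    (hαi : αi ∈ Φ.simples) (hu : u ∈ Φ.pos) (hsupp : Φ.SuppContains αi u) :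
    Φ.IsSumOfTwo αi u ∨ Φ.IsSumOfA3 αi u ∨ Φ.IsPathSum αi u := by
  induction u, hu using Finset.induction_on_measure (f := (⟪Φ.posSum, ·⟫)) with
  | h u hu ih =>
    by_cases hus : u ∈ Φ.simples
    · obtain rfl := hsupp.eq_of_mem_simples hΦ hαi hus
      refine Or.inr (Or.inr ⟨0, fun _ => u, ⟨fun _ _ => hus, fun k hk => absurd hk k.not_lt_zero,
        fun k l hl hkl => by omega⟩, by simp, rfl⟩)
    obtain ⟨j, hj, huj, hsupp'⟩ := hΦ.exists_inner_eq_one_suppContains_sub hαi hu hus hsupp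
    have hjp := mem_pos_of_mem_simples hj
    have hu' : u - j ∈ Φ.pos := hΦ.sub_mem_pos_of_inner_eq_one hu hj huj
    have hju : ⟪j, u - j⟫ = -1 := by
      rw [inner_sub_right, real_inner_comm, huj, hΦ j (Φ.pos_subset hjp)]; norm_num
    have hlt : ⟪Φ.posSum, u - j⟫ < ⟪Φ.posSum, u⟫ := by
      simpa using hΦ.inner_posSum_lt_add (u := u - j) hjp
    rw [← sub_add_cancel u j]
    rcases ih (u - j) hu' hlt hsupp' with h | h | h
    · exact Or.inl (h.add_simple hΦ hαi hj hju)
    · exact (h.add_simple hΦ hαi hj hju).imp_right Or.inl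
    · exact Or.inr (h.add_simple hΦ hj hju)

end RootSys

theorem full_support_decomposition_general {n : ℕ} (Φ : RootSys n)
    (hnorm : ∀ α ∈ Φ.roots, (inner ℝ α α : ℝ) = 2)
    (hnotA : ∃ δ ∈ Φ.simples,
      3 ≤ (Φ.simples.filter (fun γ => γ ≠ δ ∧ (inner ℝ γ δ : ℝ) ≠ 0)).card)
    (r : Esp n) (hr : r ∈ Φ.pos)
    (hfull : ∃ c : Esp n → ℝ, r = ∑ γ ∈ Φ.simples, c γ • γ ∧ ∀ γ ∈ Φ.simples, 0 < c γ)
    (αi : Esp n) (hαi : αi ∈ Φ.simples) :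
    (∃ β₁ ∈ Φ.pos, ∃ β₂ ∈ Φ.pos, r = β₁ + β₂ ∧
        Φ.SuppContains αi β₁ ∧ Φ.SuppContains αi β₂) ∨
    (∃ α ∈ Φ.pos, ∃ β ∈ Φ.pos, ∃ γ ∈ Φ.pos,
        (inner ℝ α β : ℝ) = -1 ∧ (inner ℝ β γ : ℝ) = -1 ∧ (inner ℝ α γ : ℝ) = 0 ∧
        r = α + β + γ ∧ Φ.SuppContains αi β) := by
  have hΦ : Φ.IsSimplyLaced := hnorm
  obtain ⟨c, hc, hcpos⟩ := hfull
  rcases hΦ.isSumOfTwo_or_isSumOfA3_or_isPathSum hαi hr ⟨c, hc, (hcpos αi hαi).ne'⟩ with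
    h | h | ⟨m, w, hw, rfl, -⟩
  · exact Or.inl h
  · exact Or.inr h
  obtain ⟨δ, hδ, hcard⟩ := hnotA
  have hcover : ∀ γ ∈ Φ.simples, ∃ k ≤ m, w k = γ := fun γ hγ => by
    obtain ⟨k, hk, hkγ⟩ := (hΦ.suppContains_sum_iff
      (fun k hk => hw.mem_simples k (Nat.lt_succ_iff.mp (mem_range.mp hk))) hγ).mp
      ⟨c, hc, (hcpos γ hγ).ne'⟩
    exact ⟨k, Nat.lt_succ_iff.mp (mem_range.mp hk), hkγ⟩
  exact absurd (hw.card_filter_inner_ne_zero_le_two hcover hδ) (by omega)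

/-- **Lemma.** Let `Φ` be a simply-laced irreducible root system that is not of type
`A` (equivalently, whose Dynkin diagram has a branch vertex: a simple root not
orthogonal to at least three other simple roots), let `r ∈ Φ⁺` have full support,
and let `α_i` be any simple root.  Then `r = β₁ + β₂` with `β₁, β₂ ∈ Φ⁺` both
supported on `α_i`, or `r = α + β + γ` where `α, β, γ` span a type `A₃` subsystem
as simple roots and `β` is supported on `α_i`. -/
theorem full_support_decomposition {n : ℕ} (Φ : RootSys n)
    (hnorm : ∀ α ∈ Φ.roots, (inner ℝ α α : ℝ) = 2) (hirr : Φ.IsIrreducible)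
    (hnotA : ∃ δ ∈ Φ.simples,
      3 ≤ (Φ.simples.filter (fun γ => γ ≠ δ ∧ (inner ℝ γ δ : ℝ) ≠ 0)).card)
    (r : Esp n) (hr : r ∈ Φ.pos)
    (hfull : ∃ c : Esp n → ℝ, r = ∑ γ ∈ Φ.simples, c γ • γ ∧ ∀ γ ∈ Φ.simples, 0 < c γ)
    (αi : Esp n) (hαi : αi ∈ Φ.simples) :
    (∃ β₁ ∈ Φ.pos, ∃ β₂ ∈ Φ.pos, r = β₁ + β₂ ∧
        Φ.SuppContains αi β₁ ∧ Φ.SuppContains αi β₂) ∨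
    (∃ α ∈ Φ.pos, ∃ β ∈ Φ.pos, ∃ γ ∈ Φ.pos,
        (inner ℝ α β : ℝ) = -1 ∧ (inner ℝ β γ : ℝ) = -1 ∧ (inner ℝ α γ : ℝ) = 0 ∧
        r = α + β + γ ∧ Φ.SuppContains αi β) :=
  full_support_decomposition_general Φ hnorm hnotA r hr hfull αi hαi
end
end

section
/- Let Φ be the root system of type B_n and let w ∈ W(Φ) avoid the type A₃ patterns 3142 and 2413 and the two type B₂ patterns whose inversion sets have size two. Then for every positive root β ∈ Φ⁺, the roots β and β̂ have the same color with respect to w, where β̂ denotes the unique small positive root with the same support as β. -/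
open scoped Classical
open Polynomial
noncomputable section

/-! The only non-small positive roots of `Bₙ` are `eₐ + e_b` (`a < b`), with `β̂ = eₐ`. These
span, together with `eₐ - e_b` and `e_b`, a `B₂` subsystem `{p, q, p + q, p + 2q}` with
`p = eₐ - e_b`, `q = e_b`, `p + q = eₐ`, `p + 2q = eₐ + e_b`. Inversion sets are closed and
coclosed under addition, so if `p + q` and `p + 2q = q + (p + q)` had different colors, the
restriction of the inversion set to this subsystem would be `{q, p + 2q}` or `{p, p + q}`,
a forbidden `B₂` pattern. -/

namespace RootSys

variable {n : ℕ} (Φ : RootSys n) {w : Esp n ≃ₗᵢ[ℝ] Esp n}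

theorem mapsTo_roots_of_mem_weylGroup (hw : w ∈ Φ.weylGroup) :
    ∀ α ∈ Φ.roots, w α ∈ Φ.roots := by
  induction hw using Subgroup.closure_induction'' with
  | mem g hg =>
    obtain ⟨β, hβ, rfl⟩ := hg
    exact Φ.reflect_mem β hβ
  | inv_mem g hg =>
    obtain ⟨β, hβ, rfl⟩ := hg
    rw [rootReflection, Submodule.reflection_inv]
    exact Φ.reflect_mem β hβ
  | one => exact fun α hα => hα
  | mul g h _ _ hg hh => exact fun α hα => hg _ (hh α hα)

theorem mem_invSet_iff {α : Esp n} : α ∈ Φ.invSet w ↔ α ∈ Φ.pos ∧ -(w α) ∈ Φ.pos :=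
  Finset.mem_filter

theorem apply_mem_pos_of_notMem_invSet_s16 (hw : w ∈ Φ.weylGroup) {α : Esp n} (hα : α ∈ Φ.pos)
    (hαw : α ∉ Φ.invSet w) : w α ∈ Φ.pos :=
  (Φ.pos_iff _ (Φ.mapsTo_roots_of_mem_weylGroup hw α (Φ.pos_subset hα))).mpr
    fun h => hαw ((Φ.mem_invSet_iff).mpr ⟨hα, h⟩)

theorem add_mem_invSet_s16 (hw : w ∈ Φ.weylGroup) {α β : Esp n} (hα : α ∈ Φ.invSet w)
    (hβ : β ∈ Φ.invSet w) (hαβ : α + β ∈ Φ.pos) : α + β ∈ Φ.invSet w := by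
  rw [mem_invSet_iff] at hα hβ ⊢
  have hroot : -(w (α + β)) ∈ Φ.roots :=
    Φ.neg_mem _ (Φ.mapsTo_roots_of_mem_weylGroup hw _ (Φ.pos_subset hαβ))
  rw [map_add, neg_add] at hroot ⊢
  exact ⟨hαβ, Φ.pos_add _ hα.2 _ hβ.2 hroot⟩

theorem add_notMem_invSet_s16 (hw : w ∈ Φ.weylGroup) {α β : Esp n} (hα : α ∈ Φ.pos)
    (hβ : β ∈ Φ.pos) (hαw : α ∉ Φ.invSet w) (hβw : β ∉ Φ.invSet w) (hαβ : α + β ∈ Φ.pos) :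
    α + β ∉ Φ.invSet w := by
  have hroot : w (α + β) ∈ Φ.roots := Φ.mapsTo_roots_of_mem_weylGroup hw _ (Φ.pos_subset hαβ)
  have hpos : w (α + β) ∈ Φ.pos := by
    rw [map_add] at hroot ⊢
    exact Φ.pos_add _ (Φ.apply_mem_pos_of_notMem_invSet_s16 hw hα hαw) _
      (Φ.apply_mem_pos_of_notMem_invSet_s16 hw hβ hβw) hroot
  exact fun h => (Φ.pos_iff _ hroot).mp hpos ((Φ.mem_invSet_iff).mp h).2

theorem invSet_filter_eq (U : Submodule ℝ (Esp n)) :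
    (Φ.invSet w).filter (· ∈ U) = (Φ.pos.filter (· ∈ U)).filter (· ∈ Φ.invSet w) := by
  ext x
  simp only [Finset.mem_filter, mem_invSet_iff]
  tauto

theorem invSet_add_two_smul_iff_of_not_containsB2Pattern (hw : w ∈ Φ.weylGroup)
    (hB2 : ¬ Φ.ContainsB2Pattern w) {U : Submodule ℝ (Esp n)} {p q : Esp n}
    (hli : LinearIndependent ℝ ![p, q])
    (hU : Φ.pos.filter (· ∈ U) = {p, q, p + q, p + 2 • q}) :
    p + 2 • q ∈ Φ.invSet w ↔ p + q ∈ Φ.invSet w := by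
  have hmem : ∀ x ∈ ({p, q, p + q, p + 2 • q} : Finset (Esp n)), x ∈ Φ.pos := fun x hx =>
    (Finset.mem_filter.mp (hU ▸ hx)).1
  have hp := hmem p (by simp)
  have hq := hmem q (by simp)
  have hpq := hmem (p + q) (by simp)
  have hsum : q + (p + q) = p + 2 • q := by rw [two_smul]; abel
  have hp2q := hmem (p + 2 • q) (by simp)
  have hpattern : ∀ x y : Esp n, x ≠ y →
      ({p, q, p + q, p + 2 • q} : Finset (Esp n)).filter (· ∈ Φ.invSet w) = {x, y} →
      Φ.ContainsB2Pattern w := fun x y hxy h =>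
    ⟨U, p, q, hli, hU, by rw [invSet_filter_eq, hU, h, Finset.card_pair hxy]⟩
  have hne : ∀ x ∈ Φ.pos, x ≠ 0 := fun x hx => Φ.ne_zero x (Φ.pos_subset hx)
  constructor
  · intro h2
    by_contra h1
    have hqw : q ∈ Φ.invSet w := by
      by_contra hqw
      exact Φ.add_notMem_invSet_s16 hw hq hpq hqw h1 (hsum ▸ hp2q) (hsum ▸ h2)
    have hpw : p ∉ Φ.invSet w := fun hpw => h1 (Φ.add_mem_invSet_s16 hw hpw hqw hpq)
    refine hB2 (hpattern q (p + 2 • q) ?_ ?_)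
    · rw [← hsum]
      exact fun h => hne _ hpq (by simpa using h)
    · simp [Finset.filter_insert, Finset.filter_singleton, hpw, hqw, h1, h2]
  · intro h1
    by_contra h2
    have hqw : q ∉ Φ.invSet w := fun hqw => h2 (hsum ▸ Φ.add_mem_invSet_s16 hw hqw h1 (hsum ▸ hp2q))
    have hpw : p ∈ Φ.invSet w := by
      by_contra hpw
      exact Φ.add_notMem_invSet_s16 hw hp hq hpw hqw hpq h1
    refine hB2 (hpattern p (p + q) ?_ ?_)
    · exact fun h => hne _ hq (by simpa using h)
    · simp [Finset.filter_insert, Finset.filter_singleton, hpw, hqw, h1, h2]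

end RootSys

section TypeB

variable {n : ℕ}

theorem stdB_apply (i k : Fin n) : stdB n i k = if k = i then 1 else 0 :=
  PiLp.single_apply 2 ℝ i 1 k

theorem stdB_sub_stdB_mem_typeBPos {i j : Fin n} (hij : i < j) :
    stdB n i - stdB n j ∈ typeBPos n :=
  Or.inl ⟨i, j, hij, Or.inl rfl⟩

theorem stdB_add_stdB_mem_typeBPos {i j : Fin n} (hij : i < j) :
    stdB n i + stdB n j ∈ typeBPos n :=
  Or.inl ⟨i, j, hij, Or.inr rfl⟩

theorem stdB_mem_typeBPos (i : Fin n) : stdB n i ∈ typeBPos n :=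
  Or.inr ⟨i, rfl⟩

/-- The coefficient of the simple root `α_k` in `v`: as `α_i = e_i - e_{i+1}` and `α_n = e_n`,
it is the partial sum `v₁ + ⋯ + v_k`. -/
def simpleCoeff (k : Fin n) : Esp n →ₗ[ℝ] ℝ where
  toFun v := ∑ j ∈ Finset.Iic k, v j
  map_add' x y := by simp [Finset.sum_add_distrib]
  map_smul' r x := by simp [Finset.mul_sum]

theorem simpleCoeff_apply (k : Fin n) (v : Esp n) : simpleCoeff k v = ∑ j ∈ Finset.Iic k, v j :=
  rfl

theorem simpleCoeff_stdB (k i : Fin n) : simpleCoeff k (stdB n i) = if i ≤ k then 1 else 0 := by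
  simp [simpleCoeff_apply, stdB_apply]

theorem simpleCoeff_bSimple (k i : Fin n) :
    simpleCoeff k (bSimple n i) = if i = k then 1 else 0 := by
  unfold bSimple
  by_cases h : (i : ℕ) + 1 < n
  · rw [dif_pos h, map_sub, simpleCoeff_stdB, simpleCoeff_stdB]
    simp only [Fin.le_def, Fin.ext_iff]
    split_ifs <;> norm_num <;> omega
  · have := k.isLt
    rw [dif_neg h, sub_zero, simpleCoeff_stdB]
    simp only [Fin.le_def, Fin.ext_iff]
    split_ifs <;> first | rfl | omega

theorem eq_of_simpleCoeff_eq {u v : Esp n} (h : ∀ k, simpleCoeff k u = simpleCoeff k v) :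
    u = v := by
  ext k
  induction k using WellFoundedLT.induction with
  | _ k ih =>
    have hk := h k
    rw [simpleCoeff_apply, simpleCoeff_apply, ← Finset.Iio_insert,
      Finset.sum_insert Finset.notMem_Iio_self, Finset.sum_insert Finset.notMem_Iio_self,
      Finset.sum_congr rfl fun j hj => ih j (Finset.mem_Iio.mp hj)] at hk
    linarith

theorem bSimple_injective : Function.Injective (bSimple n) := fun i j h => by
  simpa [simpleCoeff_bSimple] using congrArg (simpleCoeff j) h

theorem bSimple_mem_typeBPos (i : Fin n) : bSimple n i ∈ typeBPos n := by
  unfold bSimple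
  split_ifs with h
  · exact stdB_sub_stdB_mem_typeBPos (Fin.lt_def.mpr (Nat.lt_succ_self _))
  · rw [sub_zero]
    exact stdB_mem_typeBPos i

theorem simpleCoeff_nonneg_of_mem_typeBPos {v : Esp n} (hv : v ∈ typeBPos n) (k : Fin n) :
    0 ≤ simpleCoeff k v := by
  rcases hv with ⟨i, j, hij, rfl | rfl⟩ | ⟨i, rfl⟩
  · rw [map_sub, simpleCoeff_stdB, simpleCoeff_stdB]
    split_ifs with hi hj <;> norm_num
    exact hi (hij.le.trans ‹_›)
  · rw [map_add, simpleCoeff_stdB, simpleCoeff_stdB]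
    split_ifs <;> norm_num
  · rw [simpleCoeff_stdB]
    split_ifs <;> norm_num

theorem exists_simpleCoeff_eq_one_of_mem_typeBPos {v : Esp n} (hv : v ∈ typeBPos n) :
    ∃ k, simpleCoeff k v = 1 := by
  rcases hv with ⟨i, j, hij, rfl | rfl⟩ | ⟨i, rfl⟩
  all_goals refine ⟨i, ?_⟩
  · simp [simpleCoeff_stdB, not_le.mpr hij]
  · simp [simpleCoeff_stdB, not_le.mpr hij]
  · simp [simpleCoeff_stdB]

theorem eq_of_simpleCoeff_ne_zero_iff {u v : Esp n}
    (hu : ∀ k, simpleCoeff k u = 0 ∨ simpleCoeff k u = 1)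
    (hv : ∀ k, simpleCoeff k v = 0 ∨ simpleCoeff k v = 1)
    (h : ∀ k, simpleCoeff k u ≠ 0 ↔ simpleCoeff k v ≠ 0) : u = v :=
  eq_of_simpleCoeff_eq fun k => by
    have := h k
    rcases hu k with hu | hu <;> rcases hv k with hv | hv <;> simp_all

theorem simpleCoeff_stdB_eq_zero_or_one (i k : Fin n) :
    simpleCoeff k (stdB n i) = 0 ∨ simpleCoeff k (stdB n i) = 1 := by
  rw [simpleCoeff_stdB]
  split_ifs <;> simp

theorem simpleCoeff_stdB_sub_stdB_eq_zero_or_one {i j : Fin n} (hij : i < j) (k : Fin n) :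
    simpleCoeff k (stdB n i - stdB n j) = 0 ∨ simpleCoeff k (stdB n i - stdB n j) = 1 := by
  rw [map_sub, simpleCoeff_stdB, simpleCoeff_stdB]
  split_ifs with hi hj <;> norm_num
  exact hi (hij.le.trans ‹_›)

theorem simpleCoeff_stdB_add_stdB_ne_zero_iff {i j : Fin n} (hij : i < j) (k : Fin n) :
    simpleCoeff k (stdB n i + stdB n j) ≠ 0 ↔ simpleCoeff k (stdB n i) ≠ 0 := by
  rw [map_add, simpleCoeff_stdB, simpleCoeff_stdB]
  split_ifs with hi hj <;> norm_num
  exact hi (hij.le.trans ‹_›)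

theorem eq_or_eq_of_mem_span_stdB_pair {a b k : Fin n} {v : Esp n}
    (hv : v ∈ Submodule.span ℝ {stdB n a, stdB n b}) (hk : v k ≠ 0) : k = a ∨ k = b := by
  obtain ⟨r, s, rfl⟩ := Submodule.mem_span_pair.mp hv
  by_contra! h
  simp [stdB_apply, h.1, h.2] at hk

theorem linearIndependent_stdB_sub_stdB_stdB {a b : Fin n} (hab : a ≠ b) :
    LinearIndependent ℝ ![stdB n a - stdB n b, stdB n b] := by
  rw [LinearIndependent.pair_iff]
  intro s t hst
  have ha := congrArg (· a) hst
  have hb := congrArg (· b) hst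
  simp [stdB_apply, hab, hab.symm] at ha hb
  constructor <;> linarith

end TypeB

namespace RootSys

variable {n : ℕ} (Φ : RootSys n)

theorem bSimple_mem_simples (hpos : (Φ.pos : Set (Esp n)) = typeBPos n) (i : Fin n) :
    bSimple n i ∈ Φ.simples := by
  have hmem : ∀ v, v ∈ Φ.pos ↔ v ∈ typeBPos n := fun v => Set.ext_iff.mp hpos v
  refine Finset.mem_filter.mpr ⟨(hmem _).mpr (bSimple_mem_typeBPos i), ?_⟩
  rintro ⟨β, hβ, γ, hγ, hsum⟩
  have hcoeff : ∀ k, simpleCoeff k β + simpleCoeff k γ = if i = k then 1 else 0 := fun k => by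
    rw [← map_add, ← hsum, simpleCoeff_bSimple]
  obtain ⟨k, hk⟩ := exists_simpleCoeff_eq_one_of_mem_typeBPos ((hmem β).mp hβ)
  obtain ⟨l, hl⟩ := exists_simpleCoeff_eq_one_of_mem_typeBPos ((hmem γ).mp hγ)
  have hβk := hcoeff k
  have hγl := hcoeff l
  have := simpleCoeff_nonneg_of_mem_typeBPos ((hmem β).mp hβ) l
  have := simpleCoeff_nonneg_of_mem_typeBPos ((hmem γ).mp hγ) k
  -- coefficients are nonnegative, so both coefficients `1` sit at `i`, where they sum to `2`
  split_ifs at hβk hγl with hik hil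
  · subst hik hil
    linarith
  all_goals linarith

theorem exists_eq_bSimple_of_mem_simples (hpos : (Φ.pos : Set (Esp n)) = typeBPos n)
    {α : Esp n} (hα : α ∈ Φ.simples) : ∃ i, α = bSimple n i := by
  have hmem : ∀ v, v ∈ Φ.pos ↔ v ∈ typeBPos n := fun v => Set.ext_iff.mp hpos v
  obtain ⟨hαpos, hind⟩ := Finset.mem_filter.mp hα
  have hdecomp : ∀ β γ, β ∈ typeBPos n → γ ∈ typeBPos n → α ≠ β + γ := fun β γ hβ hγ h =>
    hind ⟨β, (hmem β).mpr hβ, γ, (hmem γ).mpr hγ, h⟩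
  rcases (hmem α).mp hαpos with ⟨i, j, hij, rfl | rfl⟩ | ⟨i, rfl⟩
  · have hi : (i : ℕ) + 1 < n := by omega
    set m : Fin n := ⟨(i : ℕ) + 1, hi⟩
    have him : i < m := Fin.lt_def.mpr (Nat.lt_succ_self i)
    by_cases hjm : j = m
    · exact ⟨i, by rw [hjm, bSimple, dif_pos hi]⟩
    · have hmj : m < j := lt_of_le_of_ne (Fin.le_def.mpr (Nat.succ_le_of_lt hij)) (Ne.symm hjm)
      exact absurd (by abel) (hdecomp (stdB n i - stdB n m) (stdB n m - stdB n j)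
        (stdB_sub_stdB_mem_typeBPos him) (stdB_sub_stdB_mem_typeBPos hmj))
  · exact absurd rfl (hdecomp _ _ (stdB_mem_typeBPos i) (stdB_mem_typeBPos j))
  · refine ⟨i, ?_⟩
    by_cases hi : (i : ℕ) + 1 < n
    · set m : Fin n := ⟨(i : ℕ) + 1, hi⟩
      have him : i < m := Fin.lt_def.mpr (Nat.lt_succ_self i)
      exact absurd (by abel) (hdecomp (stdB n i - stdB n m) (stdB n m)
        (stdB_sub_stdB_mem_typeBPos him) (stdB_mem_typeBPos m))
    · rw [bSimple, dif_neg hi, sub_zero]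

theorem simples_eq_image_bSimple (hpos : (Φ.pos : Set (Esp n)) = typeBPos n) :
    Φ.simples = Finset.univ.image (bSimple n) := by
  ext α
  simp only [Finset.mem_image, Finset.mem_univ, true_and]
  constructor
  · intro hα
    obtain ⟨i, rfl⟩ := Φ.exists_eq_bSimple_of_mem_simples hpos hα
    exact ⟨i, rfl⟩
  · rintro ⟨i, rfl⟩
    exact Φ.bSimple_mem_simples hpos i

theorem coeff_bSimple_eq_simpleCoeff (hpos : (Φ.pos : Set (Esp n)) = typeBPos n) {v : Esp n}
    {c : Esp n → ℝ} (hv : v = ∑ γ ∈ Φ.simples, c γ • γ) (k : Fin n) :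
    c (bSimple n k) = simpleCoeff k v := by
  rw [hv, Φ.simples_eq_image_bSimple hpos, Finset.sum_image fun i _ j _ h => bSimple_injective h,
    map_sum]
  simp [simpleCoeff_bSimple]

theorem pos_filter_mem_span_stdB_pair (hpos : (Φ.pos : Set (Esp n)) = typeBPos n) {a b : Fin n}
    (hab : a < b) :
    Φ.pos.filter (· ∈ Submodule.span ℝ {stdB n a, stdB n b}) =
      {stdB n a - stdB n b, stdB n b, (stdB n a - stdB n b) + stdB n b,
        (stdB n a - stdB n b) + 2 • stdB n b} := by
  have hmem : ∀ v, v ∈ Φ.pos ↔ v ∈ typeBPos n := fun v => Set.ext_iff.mp hpos v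
  have hUa : stdB n a ∈ Submodule.span ℝ {stdB n a, stdB n b} :=
    Submodule.subset_span (Set.mem_insert _ _)
  have hUb : stdB n b ∈ Submodule.span ℝ {stdB n a, stdB n b} :=
    Submodule.subset_span (Set.mem_insert_of_mem _ rfl)
  ext x
  simp only [Finset.mem_filter, Finset.mem_insert, Finset.mem_singleton, hmem]
  constructor
  · rintro ⟨hx, hxU⟩
    have hsupp := fun k hk => eq_or_eq_of_mem_span_stdB_pair (k := k) hxU hk
    rcases hx with ⟨i, j, hij, rfl | rfl⟩ | ⟨i, rfl⟩
    · obtain ⟨rfl, rfl⟩ : i = a ∧ j = b := by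
        have := hsupp i (by simp [stdB_apply, hij.ne])
        have := hsupp j (by simp [stdB_apply, hij.ne'])
        omega
      exact Or.inl rfl
    · obtain ⟨rfl, rfl⟩ : i = a ∧ j = b := by
        have := hsupp i (by simp [stdB_apply, hij.ne])
        have := hsupp j (by simp [stdB_apply, hij.ne'])
        omega
      exact Or.inr (Or.inr (Or.inr (by rw [two_smul]; abel)))
    · rcases hsupp i (by simp [stdB_apply]) with rfl | rfl
      · exact Or.inr (Or.inr (Or.inl (by abel)))
      · exact Or.inr (Or.inl rfl)
  · have hpq : (stdB n a - stdB n b) + stdB n b = stdB n a := by abel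
    have hp2q : (stdB n a - stdB n b) + 2 • stdB n b = stdB n a + stdB n b := by
      rw [two_smul]; abel
    rintro (rfl | rfl | rfl | rfl)
    · exact ⟨stdB_sub_stdB_mem_typeBPos hab, sub_mem hUa hUb⟩
    · exact ⟨stdB_mem_typeBPos b, hUb⟩
    · rw [hpq]
      exact ⟨stdB_mem_typeBPos a, hUa⟩
    · rw [hp2q]
      exact ⟨stdB_add_stdB_mem_typeBPos hab, add_mem hUa hUb⟩

theorem stdB_add_stdB_mem_invSet_iff (hpos : (Φ.pos : Set (Esp n)) = typeBPos n)
    {w : Esp n ≃ₗᵢ[ℝ] Esp n} (hw : w ∈ Φ.weylGroup) (hB2 : ¬ Φ.ContainsB2Pattern w)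
    {a b : Fin n} (hab : a < b) :
    stdB n a + stdB n b ∈ Φ.invSet w ↔ stdB n a ∈ Φ.invSet w := by
  have h := Φ.invSet_add_two_smul_iff_of_not_containsB2Pattern hw hB2
    (linearIndependent_stdB_sub_stdB_stdB hab.ne) (Φ.pos_filter_mem_span_stdB_pair hpos hab)
  rwa [sub_add_cancel, two_smul, ← add_assoc, sub_add_cancel] at h

end RootSys

theorem typeB_hat_same_color_general {n : ℕ} (Φ : RootSys n)
    (hpos : (Φ.pos : Set (Esp n)) = typeBPos n)
    (w : Esp n ≃ₗᵢ[ℝ] Esp n) (hw : w ∈ Φ.weylGroup)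
    (hB2 : ¬ Φ.ContainsB2Pattern w) :
    ∀ β ∈ Φ.pos, ∀ βh ∈ Φ.pos, Φ.IsSmall βh →
      (∃ c d : Esp n → ℝ,
        β = ∑ γ ∈ Φ.simples, c γ • γ ∧ βh = ∑ γ ∈ Φ.simples, d γ • γ ∧
        ∀ γ ∈ Φ.simples, (c γ ≠ 0 ↔ d γ ≠ 0)) →
      (β ∈ Φ.invSet w ↔ βh ∈ Φ.invSet w) := by
  rintro β hβ βh - ⟨e, he, he01⟩ ⟨c, d, hc, hd, hcd⟩
  have hsimple := Φ.bSimple_mem_simples hpos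
  have hβh01 : ∀ k, simpleCoeff k βh = 0 ∨ simpleCoeff k βh = 1 := fun k =>
    Φ.coeff_bSimple_eq_simpleCoeff hpos he k ▸ he01 _ (hsimple k)
  have hsupp : ∀ k, simpleCoeff k β ≠ 0 ↔ simpleCoeff k βh ≠ 0 := fun k => by
    rw [← Φ.coeff_bSimple_eq_simpleCoeff hpos hc, ← Φ.coeff_bSimple_eq_simpleCoeff hpos hd]
    exact hcd _ (hsimple k)
  rcases (Set.ext_iff.mp hpos β).mp hβ with ⟨i, j, hij, rfl | rfl⟩ | ⟨i, rfl⟩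
  · rw [eq_of_simpleCoeff_ne_zero_iff (simpleCoeff_stdB_sub_stdB_eq_zero_or_one hij) hβh01 hsupp]
  · have hhat : stdB n i = βh := eq_of_simpleCoeff_ne_zero_iff
      (simpleCoeff_stdB_eq_zero_or_one i) hβh01
      fun k => (simpleCoeff_stdB_add_stdB_ne_zero_iff hij k).symm.trans (hsupp k)
    rw [← hhat, Φ.stdB_add_stdB_mem_invSet_iff hpos hw hB2 hij]
  · rw [eq_of_simpleCoeff_ne_zero_iff (simpleCoeff_stdB_eq_zero_or_one i) hβh01 hsupp]

/-- **Lemma.** In type `Bₙ`, if `w` avoids the type `A₃` patterns `3142`, `2413`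
and the two type `B₂` patterns with inversion sets of size two, then every positive
root `β` has the same color as the small root `β̂` with the same support. -/
theorem typeB_hat_same_color {n : ℕ} (Φ : RootSys n)
    (hpos : (Φ.pos : Set (Esp n)) = typeBPos n)
    (hroots : (Φ.roots : Set (Esp n)) = (Φ.pos : Set (Esp n)) ∪ (-(Φ.pos : Set (Esp n))))
    (w : Esp n ≃ₗᵢ[ℝ] Esp n) (hw : w ∈ Φ.weylGroup)
    (hA3 : ¬ Φ.ContainsA3Pattern w) (hB2 : ¬ Φ.ContainsB2Pattern w) :
    ∀ β ∈ Φ.pos, ∀ βh ∈ Φ.pos, Φ.IsSmall βh →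
      (∃ c d : Esp n → ℝ,
        β = ∑ γ ∈ Φ.simples, c γ • γ ∧ βh = ∑ γ ∈ Φ.simples, d γ • γ ∧
        ∀ γ ∈ Φ.simples, (c γ ≠ 0 ↔ d γ ≠ 0)) →
      (β ∈ Φ.invSet w ↔ βh ∈ Φ.invSet w) :=
  typeB_hat_same_color_general Φ hpos w hw hB2
end
end
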